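/- arXiv:1911.00309 — 8 statements merged into one kernel-verified Lean document; each statement's English description precedes it below -/
import Mathlib

section
/- Let L/K be an algebraic extension of fields, let O_v ⊆ O_{v0} be valuation subrings of K, and let O_w be a valuation subring of L satisfying O_w ∩ K = O_v. Then there exists a unique valuation subring O of L such that O_w ⊆ O and O ∩ K = O_{v0}. -/
open Polynomial

namespace ExistsUniqueCoarseningAux

variable {K L : Type*} [Field K] [Field L] [Algebra K L]

lemma unit_of_eq (Ow : ValuationSubring L) {x : L} (hx : x ≠ 0) {ci cj : K}
    (hci : ci ≠ 0) (hcj : cj ≠ 0) {i j : ℕ} (hij : i < j)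
    (heq : Ow.valuation (algebraMap K L ci * x ^ i) =
      Ow.valuation (algebraMap K L cj * x ^ j)) :
    ∃ (n : ℕ) (c : K), 0 < n ∧ c ≠ 0 ∧ algebraMap K L c * x ^ n ∈ Ow ∧
      (algebraMap K L c * x ^ n)⁻¹ ∈ Ow := by
  have hmi : algebraMap K L ci ≠ 0 := fun h => hci ((_root_.map_eq_zero _).mp h)
  have hmj : algebraMap K L cj ≠ 0 := fun h => hcj ((_root_.map_eq_zero _).mp h)
  have ht1 : algebraMap K L ci * x ^ i ≠ 0 := mul_ne_zero hmi (pow_ne_zero _ hx)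
  have hu : algebraMap K L (cj / ci) * x ^ (j - i)
      = (algebraMap K L cj * x ^ j) / (algebraMap K L ci * x ^ i) := by
    rw [map_div₀, pow_sub₀ x hx hij.le]
    field_simp
  have hval : Ow.valuation (algebraMap K L (cj / ci) * x ^ (j - i)) = 1 := by
    rw [hu, map_div₀, ← heq, div_self]
    simpa using ht1
  refine ⟨j - i, cj / ci, Nat.sub_pos_of_lt hij, div_ne_zero hcj hci, ?_, ?_⟩
  · exact Ow.mem_of_valuation_le_one _ hval.le
  · exact Ow.mem_of_valuation_le_one _ (by rw [map_inv₀, hval, inv_one])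

lemma key [Algebra.IsAlgebraic K L] (Ow : ValuationSubring L) (x : L) (hx : x ≠ 0) :
    ∃ (n : ℕ) (c : K), 0 < n ∧ c ≠ 0 ∧ algebraMap K L c * x ^ n ∈ Ow ∧
      (algebraMap K L c * x ^ n)⁻¹ ∈ Ow := by
  have hint : IsIntegral K x := (Algebra.IsAlgebraic.isAlgebraic x).isIntegral
  set p := minpoly K x with hpdef
  have hp0 : p ≠ 0 := minpoly.ne_zero hint
  have hdeg : 0 < p.natDegree := minpoly.natDegree_pos hint
  have hc0 : p.coeff 0 ≠ 0 := minpoly.coeff_zero_ne_zero hint hx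
  have h0s : (0 : ℕ) ∈ p.support := mem_support_iff.mpr hc0
  have hds : p.natDegree ∈ p.support := natDegree_mem_support_of_nonzero hp0
  have hsum : ∑ i ∈ p.support, algebraMap K L (p.coeff i) * x ^ i = 0 := by
    have h := minpoly.aeval K x
    rwa [aeval_def, eval₂_eq_sum, Polynomial.sum_def] at h
  set w := Ow.valuation with hwdef
  set f : ℕ → _ := fun i => w (algebraMap K L (p.coeff i) * x ^ i) with hfdef
  obtain ⟨i0, hi0s, hi0max⟩ := p.support.exists_max_image f ⟨0, h0s⟩
  have hne : (p.support.erase i0).Nonempty := by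
    rcases eq_or_ne i0 0 with h | h
    · exact ⟨p.natDegree, Finset.mem_erase.mpr ⟨by omega, hds⟩⟩
    · exact ⟨0, Finset.mem_erase.mpr ⟨h.symm, h0s⟩⟩
  obtain ⟨j, hjs, hjmax⟩ := (p.support.erase i0).exists_max_image f hne
  have hji : j ≠ i0 := (Finset.mem_erase.mp hjs).1
  have hjsup : j ∈ p.support := (Finset.mem_erase.mp hjs).2
  have hterm : algebraMap K L (p.coeff i0) * x ^ i0 =
      -∑ i ∈ p.support.erase i0, algebraMap K L (p.coeff i) * x ^ i := by
    rw [eq_neg_iff_add_eq_zero, ← Finset.add_sum_erase _ _ hi0s] at *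
    exact hsum
  have hle : f i0 ≤ f j := by
    have : f i0 = w (-∑ i ∈ p.support.erase i0, algebraMap K L (p.coeff i) * x ^ i) := by
      rw [hfdef]; exact congrArg w hterm
    rw [this, Valuation.map_neg]
    exact w.map_sum_le fun i hi => hjmax i hi
  have heq : f i0 = f j := le_antisymm hle (hi0max j hjsup)
  have hcj : p.coeff j ≠ 0 := mem_support_iff.mp hjsup
  have hci0 : p.coeff i0 ≠ 0 := mem_support_iff.mp hi0s
  rcases lt_or_gt_of_ne hji with h | h
  · exact unit_of_eq Ow hx hcj hci0 h heq.symm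
  · exact unit_of_eq Ow hx hci0 hcj h heq

lemma mem_of_pow_mem (O : ValuationSubring L) {x : L} {n : ℕ} (hn : 0 < n)
    (hinv : x⁻¹ ∈ O) (hpow : x ^ n ∈ O) : x ∈ O := by
  rcases eq_or_ne x 0 with rfl | hx
  · exact zero_mem O
  have hxx : x ^ n * (x⁻¹) ^ (n - 1) = x := by
    rw [inv_pow, ← pow_sub₀ x hx (by omega), Nat.sub_sub_self hn, pow_one]
  exact hxx ▸ mul_mem hpow (pow_mem hinv _)

lemma sol_le [Algebra.IsAlgebraic K L] (Ov0 : ValuationSubring K)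
    (Ow O1 O2 : ValuationSubring L) (h1w : Ow ≤ O1) (h2w : Ow ≤ O2)
    (h1 : O1.comap (algebraMap K L) = Ov0) (h2 : O2.comap (algebraMap K L) = Ov0) :
    O1 ≤ O2 := by
  intro x hx1
  by_contra hx2
  have hx0 : x ≠ 0 := fun h => hx2 (h ▸ zero_mem O2)
  have hxinv2 : x⁻¹ ∈ O2 := (O2.mem_or_inv_mem x).resolve_left hx2
  have hxw : x ∉ Ow := fun h => hx2 (h2w h)
  have hxinvw : x⁻¹ ∈ Ow := (Ow.mem_or_inv_mem x).resolve_left hxw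
  obtain ⟨n, c, hn, hc0, hu, huinv⟩ := key (K := K) Ow x hx0
  have hmc : algebraMap K L c ≠ 0 := fun h => hc0 ((_root_.map_eq_zero _).mp h)
  have hcinv1 : algebraMap K L c⁻¹ ∈ O1 := by
    have he : algebraMap K L c⁻¹ = (algebraMap K L c * x ^ n)⁻¹ * x ^ n := by
      rw [map_inv₀]
      field_simp
    rw [he]
    exact mul_mem (h1w huinv) (pow_mem hx1 n)
  have hcinv0 : (c⁻¹ : K) ∈ Ov0 := by
    rw [← h1]; exact ValuationSubring.mem_comap.mpr hcinv1
  have hcinv2 : algebraMap K L c⁻¹ ∈ O2 := by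
    rw [← h2] at hcinv0; exact ValuationSubring.mem_comap.mp hcinv0
  have hxn2 : x ^ n ∈ O2 := by
    have he : x ^ n = algebraMap K L c⁻¹ * (algebraMap K L c * x ^ n) := by
      rw [map_inv₀]; field_simp
    rw [he]
    exact mul_mem hcinv2 (h2w hu)
  exact hx2 (mem_of_pow_mem O2 hn hxinv2 hxn2)

/-- The coarsening of `Ow` generated by the units of `Ov0`. -/
def coarsen (Ov0 : ValuationSubring K) (Ow : ValuationSubring L) : ValuationSubring L where
  carrier := {x : L | ∃ c : K, c ≠ 0 ∧ c ∈ Ov0 ∧ c⁻¹ ∈ Ov0 ∧ algebraMap K L c * x ∈ Ow}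
  one_mem' := ⟨1, one_ne_zero, one_mem _, by simpa using one_mem Ov0, by simpa using one_mem Ow⟩
  zero_mem' := ⟨1, one_ne_zero, one_mem _, by simpa using one_mem Ov0, by simpa using zero_mem Ow⟩
  neg_mem' := by
    rintro x ⟨c, h1, h2, h3, h4⟩
    exact ⟨c, h1, h2, h3, by rw [mul_neg]; exact neg_mem h4⟩
  mul_mem' := by
    rintro x y ⟨a, ha1, ha2, ha3, ha4⟩ ⟨b, hb1, hb2, hb3, hb4⟩
    refine ⟨a * b, mul_ne_zero ha1 hb1, mul_mem ha2 hb2, by rw [mul_inv]; exact mul_mem ha3 hb3, ?_⟩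
    have : algebraMap K L (a * b) * (x * y) = (algebraMap K L a * x) * (algebraMap K L b * y) := by
      rw [map_mul]; ring
    rw [this]; exact mul_mem ha4 hb4
  add_mem' := by
    rintro x y ⟨a, ha1, ha2, ha3, ha4⟩ ⟨b, hb1, hb2, hb3, hb4⟩
    have hma : algebraMap K L a ≠ 0 := fun h => ha1 ((_root_.map_eq_zero _).mp h)
    have hmb : algebraMap K L b ≠ 0 := fun h => hb1 ((_root_.map_eq_zero _).mp h)
    rcases Ow.mem_or_inv_mem (algebraMap K L (a / b)) with h | h
    · refine ⟨a, ha1, ha2, ha3, ?_⟩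
      have he : algebraMap K L a * (x + y) =
          algebraMap K L a * x + algebraMap K L (a / b) * (algebraMap K L b * y) := by
        rw [map_div₀]; field_simp
      rw [he]; exact add_mem ha4 (mul_mem h hb4)
    · rw [← map_inv₀, inv_div] at h
      refine ⟨b, hb1, hb2, hb3, ?_⟩
      have he : algebraMap K L b * (x + y) =
          algebraMap K L (b / a) * (algebraMap K L a * x) + algebraMap K L b * y := by
        rw [map_div₀]; field_simp
      rw [he]; exact add_mem (mul_mem h ha4) hb4
  mem_or_inv_mem' := by
    intro x
    rcases Ow.mem_or_inv_mem x with h | h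
    · exact Or.inl ⟨1, one_ne_zero, one_mem _, by simpa using one_mem Ov0, by simpa using h⟩
    · exact Or.inr ⟨1, one_ne_zero, one_mem _, by simpa using one_mem Ov0, by simpa using h⟩

lemma mem_coarsen {Ov0 : ValuationSubring K} {Ow : ValuationSubring L} {x : L} :
    x ∈ coarsen Ov0 Ow ↔
      ∃ c : K, c ≠ 0 ∧ c ∈ Ov0 ∧ c⁻¹ ∈ Ov0 ∧ algebraMap K L c * x ∈ Ow :=
  Iff.rfl

end ExistsUniqueCoarseningAux

open ExistsUniqueCoarseningAux in
/-- Let `L/K` be an algebraic extension of fields, let `O_v ⊆ O_{v0}` be valuation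
subrings of `K`, and let `O_w` be a valuation subring of `L` with `O_w ∩ K = O_v`
(i.e. `O_w` is a prolongation of `O_v` to `L`).  Then there exists a unique
valuation subring `O` of `L` with `O_w ⊆ O` and `O ∩ K = O_{v0}` (i.e. a unique
coarsening of `O_w` which is a prolongation of `O_{v0}`). -/
theorem exists_unique_coarsening_prolongation
    {K L : Type*} [Field K] [Field L] [Algebra K L] [Algebra.IsAlgebraic K L]
    (Ov Ov0 : ValuationSubring K) (hle : Ov ≤ Ov0)
    (Ow : ValuationSubring L) (hw : Ow.comap (algebraMap K L) = Ov) :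
    ∃! O : ValuationSubring L, Ow ≤ O ∧ O.comap (algebraMap K L) = Ov0 := by
  have hOwle : Ow ≤ coarsen Ov0 Ow := by
    intro x hx
    exact ⟨1, one_ne_zero, one_mem _, by simpa using one_mem Ov0, by simpa using hx⟩
  have hcomap : (coarsen Ov0 Ow).comap (algebraMap K L) = Ov0 := by
    ext y
    rw [ValuationSubring.mem_comap, mem_coarsen]
    constructor
    · rintro ⟨c, hc0, hc, hc', hm⟩
      rw [← map_mul] at hm
      have hcy : c * y ∈ Ov := by rw [← hw]; exact ValuationSubring.mem_comap.mpr hm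
      have : y = c⁻¹ * (c * y) := by field_simp
      rw [this]
      exact mul_mem hc' (hle hcy)
    · intro hy
      by_cases hyv : y ∈ Ov
      · refine ⟨1, one_ne_zero, one_mem _, by simpa using one_mem Ov0, ?_⟩
        rw [map_one, one_mul]
        rw [← hw] at hyv
        exact ValuationSubring.mem_comap.mp hyv
      · have hy0 : y ≠ 0 := fun h => hyv (h ▸ zero_mem Ov)
        have hyinv : y⁻¹ ∈ Ov := (Ov.mem_or_inv_mem y).resolve_left hyv
        refine ⟨y⁻¹, inv_ne_zero hy0, hle hyinv, by simpa using hy, ?_⟩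
        rw [← map_mul, inv_mul_cancel₀ hy0, map_one]
        exact one_mem Ow
  refine ⟨coarsen Ov0 Ow, ⟨hOwle, hcomap⟩, ?_⟩
  rintro O ⟨hO1, hO2⟩
  exact le_antisymm (sol_le Ov0 Ow O _ hO1 hOwle hO2 hcomap)
    (sol_le Ov0 Ow _ O hOwle hO1 hcomap hO2)
end

section
/- Let Γ be a subgroup of a linearly ordered abelian group Γ' such that the quotient group Γ'/Γ is torsion, and let Δ be a convex subgroup of Γ (with respect to the order induced from Γ'). Then there is exactly one convex subgroup Δ' of Γ' with Δ' ∩ Γ = Δ, namely the convex hull of Δ in Γ', i.e. the set {x ∈ Γ' : ∃ d ∈ Δ, −d ≤ x ≤ d}. -/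
/-- A convex subgroup of a linearly ordered abelian group: a subgroup `H` such that
whenever `h ∈ H` and `0 ≤ x ≤ h`, then `x ∈ H`. -/
def IsConvexSubgroup {Γ : Type*} [AddCommGroup Γ] [LinearOrder Γ] [IsOrderedAddMonoid Γ] (H : AddSubgroup Γ) : Prop :=
  ∀ h ∈ H, ∀ x : Γ, 0 ≤ x → x ≤ h → x ∈ H

/-!
The convex hull of `Δ` is the smallest convex subgroup of `Γ'` containing `Δ`, and it meets `Γ`
exactly in `Δ` because `Δ` is convex in `Γ`. Conversely, if `Δ'` is a subgroup with
`Δ' ∩ Γ ⊆ Δ` and `x ∈ Δ'`, then some multiple `n • |x|` with `n ≥ 1` lies in `Γ`, hence in `Δ`,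
and it bounds `x`; so `Δ'` is contained in the hull.
-/

section

variable {G : Type*} [AddCommGroup G] [LinearOrder G] [IsOrderedAddMonoid G]

namespace AddSubgroup

def convexHull (Δ : AddSubgroup G) : AddSubgroup G where
  carrier := {x | ∃ d ∈ Δ, -d ≤ x ∧ x ≤ d}
  zero_mem' := ⟨0, Δ.zero_mem, by simp⟩
  add_mem' := by
    rintro a b ⟨d, hd, hda, had⟩ ⟨e, he, heb, hbe⟩
    exact ⟨d + e, Δ.add_mem hd he, by rw [neg_add]; exact add_le_add hda heb, add_le_add had hbe⟩
  neg_mem' := by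
    rintro a ⟨d, hd, hda, had⟩
    exact ⟨d, hd, neg_le_neg had, neg_le.mpr hda⟩

theorem mem_convexHull_iff {Δ : AddSubgroup G} {x : G} :
    x ∈ Δ.convexHull ↔ ∃ d ∈ Δ, |x| ≤ d := by
  simp only [abs_le]
  rfl

theorem le_convexHull (Δ : AddSubgroup G) : Δ ≤ Δ.convexHull :=
  fun x hx => mem_convexHull_iff.2 ⟨|x|, abs_mem_iff.2 hx, le_rfl⟩

theorem mem_of_abs_le_of_mem {K Δ : AddSubgroup G}
    (hconv : ∀ h ∈ Δ, ∀ x ∈ K, 0 ≤ x → x ≤ h → x ∈ Δ) {d x : G} (hd : d ∈ Δ) (hx : x ∈ K)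
    (hxd : |x| ≤ d) : x ∈ Δ :=
  abs_mem_iff.1 <| hconv d hd |x| (abs_mem_iff.2 hx) (abs_nonneg x) hxd

theorem convexHull_inf_eq {Γ Δ : AddSubgroup G} (hΔΓ : Δ ≤ Γ)
    (hconv : ∀ h ∈ Δ, ∀ x ∈ Γ, 0 ≤ x → x ≤ h → x ∈ Δ) : Δ.convexHull ⊓ Γ = Δ := by
  refine le_antisymm ?_ (le_inf Δ.le_convexHull hΔΓ)
  rintro x ⟨hx, hxΓ⟩
  obtain ⟨d, hd, hxd⟩ := mem_convexHull_iff.1 hx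
  exact mem_of_abs_le_of_mem hconv hd hxΓ hxd

theorem le_convexHull_of_inf_le {Γ Δ H : AddSubgroup G}
    (htor : ∀ x : G, ∃ n : ℕ, 0 < n ∧ n • x ∈ Γ) (hH : H ⊓ Γ ≤ Δ) : H ≤ Δ.convexHull := by
  intro x hx
  obtain ⟨n, hn, hnx⟩ := htor x
  have hbound : n • |x| ∈ H ⊓ Γ :=
    mem_inf.2 ⟨H.nsmul_mem (abs_mem_iff.2 hx) n, by rw [← abs_nsmul]; exact abs_mem_iff.2 hnx⟩
  exact mem_convexHull_iff.2 ⟨n • |x|, hH hbound, le_self_nsmul (abs_nonneg x) hn.ne'⟩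

end AddSubgroup

open AddSubgroup

theorem IsConvexSubgroup.convexHull_le {Δ H : AddSubgroup G} (hH : IsConvexSubgroup H)
    (hΔH : Δ ≤ H) : Δ.convexHull ≤ H := by
  intro x hx
  obtain ⟨d, hd, hxd⟩ := mem_convexHull_iff.1 hx
  exact mem_of_abs_le_of_mem (K := ⊤) (fun h hh y _ => hH h hh y) (hΔH hd) trivial hxd

theorem isConvexSubgroup_convexHull (Δ : AddSubgroup G) : IsConvexSubgroup Δ.convexHull := by
  rintro h ⟨d, hd, -, hhd⟩ x hx0 hxh
  exact ⟨d, hd, (neg_nonpos.2 (hx0.trans (hxh.trans hhd))).trans hx0, hxh.trans hhd⟩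

theorem IsConvexSubgroup.eq_convexHull_of_inf_eq {Γ Δ H : AddSubgroup G}
    (htor : ∀ x : G, ∃ n : ℕ, 0 < n ∧ n • x ∈ Γ) (hH : IsConvexSubgroup H) (hHΓ : H ⊓ Γ = Δ) :
    H = Δ.convexHull :=
  le_antisymm (le_convexHull_of_inf_le htor hHΓ.le) (hH.convexHull_le (hHΓ ▸ inf_le_left))

end

/-- Let `Γ` be a subgroup of a linearly ordered abelian group `Γ'` with `Γ'/Γ` torsion,
and let `Δ` be a convex subgroup of `Γ`.  Then there is exactly one convex subgroup
`Δ'` of `Γ'` with `Δ' ∩ Γ = Δ`, namely the convex hull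
`{x ∈ Γ' : ∃ d ∈ Δ, −d ≤ x ≤ d}` of `Δ` in `Γ'`. -/
theorem existsUnique_convex_subgroup_of_torsion_quotient
    {Γ' : Type*} [AddCommGroup Γ'] [LinearOrder Γ'] [IsOrderedAddMonoid Γ'] (Γ : AddSubgroup Γ')
    (htor : ∀ x : Γ', ∃ n : ℕ, 0 < n ∧ n • x ∈ Γ)
    (Δ : AddSubgroup Γ') (hΔΓ : Δ ≤ Γ)
    (hconv : ∀ h ∈ Δ, ∀ x ∈ Γ, 0 ≤ x → x ≤ h → x ∈ Δ) :
    (∃! Δ' : AddSubgroup Γ', IsConvexSubgroup Δ' ∧ Δ' ⊓ Γ = Δ) ∧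
      ∀ Δ' : AddSubgroup Γ', IsConvexSubgroup Δ' → Δ' ⊓ Γ = Δ →
        (Δ' : Set Γ') = {x : Γ' | ∃ d ∈ Δ, -d ≤ x ∧ x ≤ d} := by
  have hhull : IsConvexSubgroup Δ.convexHull ∧ Δ.convexHull ⊓ Γ = Δ :=
    ⟨isConvexSubgroup_convexHull Δ, AddSubgroup.convexHull_inf_eq hΔΓ hconv⟩
  refine ⟨⟨Δ.convexHull, hhull, ?_⟩, ?_⟩
  · rintro Δ' ⟨hc, hi⟩
    exact hc.eq_convexHull_of_inf_eq htor hi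
  · intro Δ' hc hi
    rw [hc.eq_convexHull_of_inf_eq htor hi]
    rfl
end

section
/- Let K be a field, let O_v ⊆ O_{v0} be valuation subrings of K with induced valuation subring Ō_v of the residue field Kv0, let L/K be a finite field extension, and let O_u be a prolongation of O_v to L. Let O_{u0} be the unique valuation subring of L with O_u ⊆ O_{u0} and O_{u0} ∩ K = O_{v0}, and let Ō_u be the image of O_u in the residue field Lu0 of O_{u0}, which is a prolongation of Ō_v to Lu0 (with respect to the embedding Kv0 → Lu0 induced by the inclusion O_{v0} ⊆ O_{u0}). Then e(u/v) = e(u0/v0)·e(ū/v̄) and f(u/v) = f(ū/v̄). -/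
variable {K : Type*} [Field K] {L : Type*} [Field L]

/-- The ring homomorphism between valuation subrings induced by a field embedding,
when the lower valuation subring is the pullback of the upper one. -/
def prolongHom (f : K →+* L) (Ov : ValuationSubring K) (Ow : ValuationSubring L)
    (h : Ow.comap f = Ov) : Ov →+* Ow where
  toFun x := ⟨f x, by
    have hx : (x : K) ∈ Ow.comap f := by rw [h]; exact x.2
    exact ValuationSubring.mem_comap.mp hx⟩
  map_one' := by ext; simp
  map_mul' x y := by ext; simp
  map_zero' := by ext; simp
  map_add' x y := by ext; simp

theorem prolongHom_isLocalHom (f : K →+* L) (Ov : ValuationSubring K)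
    (Ow : ValuationSubring L) (h : Ow.comap f = Ov) :
    IsLocalHom (prolongHom f Ov Ow h) := by
  constructor
  intro a ha
  rcases isUnit_iff_exists_inv.mp ha with ⟨b, hb⟩
  have hb' : f a * (b : L) = 1 := congrArg Subtype.val hb
  have hfa : f (a : K) ≠ 0 := left_ne_zero_of_mul_eq_one hb'
  have ha0 : (a : K) ≠ 0 := by
    intro h0
    exact hfa (by rw [h0, map_zero])
  have hbeq : (b : L) = f ((a : K)⁻¹) := by
    rw [map_inv₀]
    exact eq_inv_of_mul_eq_one_right hb'
  have hmem : (a : K)⁻¹ ∈ Ov := by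
    have hm : (a : K)⁻¹ ∈ Ow.comap f := ValuationSubring.mem_comap.mpr (hbeq ▸ b.2)
    rwa [h] at hm
  refine isUnit_iff_exists_inv.mpr ⟨⟨(a : K)⁻¹, hmem⟩, ?_⟩
  ext
  simp [mul_inv_cancel₀ ha0]

/-- The induced embedding of residue fields. -/
noncomputable def residueFieldMap (f : K →+* L) (Ov : ValuationSubring K)
    (Ow : ValuationSubring L) (h : Ow.comap f = Ov) :
    IsLocalRing.ResidueField Ov →+* IsLocalRing.ResidueField Ow :=
  haveI := prolongHom_isLocalHom f Ov Ow h
  IsLocalRing.ResidueField.map (prolongHom f Ov Ow h)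

/-- The ramification index `e(w/v)`: the index of the image of `Kˣ/Ovˣ` in `Lˣ/Owˣ`. -/
noncomputable def ramificationIndex (f : K →+* L) (Ow : ValuationSubring L) : ℕ :=
  ((QuotientGroup.mk' Ow.unitGroup).comp (Units.map (f : K →* L))).range.index

open scoped Classical in
/-- The inertia degree `f(w/v)`: the degree of the residue field extension. -/
noncomputable def inertiaDegree (f : K →+* L) (Ov : ValuationSubring K)
    (Ow : ValuationSubring L) : ℕ :=
  if h : Ow.comap f = Ov then
    @Module.finrank (IsLocalRing.ResidueField Ov) (IsLocalRing.ResidueField Ow) _ _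
      (residueFieldMap f Ov Ow h).toModule
  else 0

/-- The set of prolongations of a valuation subring of `K` to `L`. -/
def prolongations (Ov : ValuationSubring K) (L : Type*) [Field L] [Algebra K L] :
    Set (ValuationSubring L) :=
  {Ow | Ow.comap (algebraMap K L) = Ov}

/-- The fundamental equality for the extension `L/K`. -/
def FundamentalEquality (Ov : ValuationSubring K) (L : Type*) [Field L] [Algebra K L] : Prop :=
  (prolongations Ov L).Finite ∧
    Module.finrank K L =
      ∑ᶠ Ow ∈ prolongations Ov L,
        ramificationIndex (algebraMap K L) Ow * inertiaDegree (algebraMap K L) Ov Ow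

/-- A valued field is defectless if the fundamental equality holds for every
finite extension. -/
def IsDefectless {K : Type u} [Field K] (Ov : ValuationSubring K) : Prop :=
  ∀ (L : Type u) [Field L] [Algebra K L], FiniteDimensional K L →
    FundamentalEquality Ov L

/-- A valued field is separably defectless if the fundamental equality holds for every
finite separable extension. -/
def IsSeparablyDefectless {K : Type u} [Field K] (Ov : ValuationSubring K) : Prop :=
  ∀ (L : Type u) [Field L] [Algebra K L], FiniteDimensional K L →
    Algebra.IsSeparable K L → FundamentalEquality Ov L

/-!
Because the maximal ideal of `O_{u0}` is contained in `O_u`, an element of `O_{u0}` lies in `O_u`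
exactly when its residue lies in `Ō_u`. Hence reduction modulo the maximal ideal of `O_{u0}` maps
`O_u` onto `Ō_u`, and the residue fields of `O_u` and `Ō_u` coincide, compatibly with the
embeddings coming from `K`; this gives `f(u/v) = f(ū/v̄)`.

For the ramification indices, `[Lˣ : Kˣ O_uˣ] = [Lˣ : Kˣ O_{u0}ˣ] · [O_{u0}ˣ : Kˣ O_uˣ ∩ O_{u0}ˣ]`,
and the reduction `O_{u0}ˣ → (Lu0)ˣ` is surjective, pulls `Ō_uˣ` back to `O_uˣ` and maps
`Kˣ ∩ O_{u0}ˣ = O_{v0}ˣ` onto `(Kv0)ˣ`, so the second factor is `[(Lu0)ˣ : (Kv0)ˣ Ō_uˣ]`.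
-/

open IsLocalRing

theorem Subgroup.index_sup_eq_mul_of_comap_eq {G H : Type*} [CommGroup G] [CommGroup H]
    {R U U₀ : Subgroup G} (hU : U ≤ U₀) {Rb Ub : Subgroup H} (χ : U₀ →* H)
    (hχ : Function.Surjective χ) (hUb : Ub.comap χ = U.subgroupOf U₀)
    (hRb : (R.subgroupOf U₀).map χ = Rb) :
    (R ⊔ U).index = (R ⊔ U₀).index * (Rb ⊔ Ub).index := by
  have hker : χ.ker ≤ U.subgroupOf U₀ := hUb ▸ χ.ker_le_comap Ub
  have hsub : (R ⊔ U).subgroupOf U₀ = (Rb ⊔ Ub).comap χ := by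
    rw [← comap_sup_eq _ _ _ hχ, ← hRb, comap_map_eq, hUb, sup_assoc, sup_eq_right.mpr hker]
    apply map_injective U₀.subtype_injective
    rw [map_sup, subgroupOf_map_subtype, subgroupOf_map_subtype, subgroupOf_map_subtype,
      inf_of_le_left hU, sup_comm R U, sup_inf_assoc_of_le R hU, sup_comm]
  calc (R ⊔ U).index = (R ⊔ U).relIndex (R ⊔ U₀) * (R ⊔ U₀).index :=
        (relIndex_mul_index (sup_le_sup_left hU R)).symm
    _ = (R ⊔ U₀).index * (Rb ⊔ Ub).index := by
        rw [mul_comm, ← sup_eq_right.mpr hU, ← sup_assoc, relIndex_sup_left, relIndex, hsub,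
          index_comap_of_surjective _ hχ]

namespace ValuationSubring

variable {F : Type*} [Field F]

theorem mem_unitGroup_iff_mem_and_inv_mem (A : ValuationSubring F) (u : Fˣ) :
    u ∈ A.unitGroup ↔ (u : F) ∈ A ∧ ((u⁻¹ : Fˣ) : F) ∈ A := by
  have hpos : 0 < A.valuation (u : F) := zero_lt_iff.mpr ((A.valuation.ne_zero_iff).mpr u.ne_zero)
  rw [mem_unitGroup_iff, ← valuation_le_one_iff, ← valuation_le_one_iff, Units.val_inv_eq_inv_val,
    map_inv₀, inv_le_one₀ hpos, le_antisymm_iff]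

theorem unitGroup_comap (Ow : ValuationSubring L) (f : K →+* L) :
    (Ow.comap f).unitGroup = Ow.unitGroup.comap (Units.map (f : K →* L)) := by
  ext k
  rw [Subgroup.mem_comap, mem_unitGroup_iff_mem_and_inv_mem, mem_unitGroup_iff_mem_and_inv_mem,
    mem_comap, mem_comap]
  rfl

section Induced

def IsInducedBy {O₀ : ValuationSubring F} (Obar : ValuationSubring (ResidueField O₀))
    (O : ValuationSubring F) : Prop :=
  (Obar : Set (ResidueField O₀)) = residue O₀ '' {y : O₀ | (y : F) ∈ O}

variable {O O₀ : ValuationSubring F} {Obar : ValuationSubring (ResidueField O₀)}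

theorem residue_mem_iff (hle : O ≤ O₀) (hObar : IsInducedBy Obar O) (z : O₀) :
    residue O₀ z ∈ Obar ↔ (z : F) ∈ O := by
  rw [← SetLike.mem_coe, hObar]
  refine ⟨?_, fun hz => ⟨z, hz, rfl⟩⟩
  rintro ⟨y, hy, hyz⟩
  have hmax : z - y ∈ maximalIdeal O₀ := Ideal.Quotient.eq.mp hyz.symm
  have hdiff : (z : F) - y ∈ O :=
    nonunits_subset (nonunits_le_nonunits.mpr hle (coe_mem_nonunits_iff.mpr hmax))
  simpa using O.add_mem _ _ hdiff hy

theorem comap_unitGroupToResidueFieldUnits_unitGroup (hle : O ≤ O₀)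
    (hObar : IsInducedBy Obar O) :
    Obar.unitGroup.comap O₀.unitGroupToResidueFieldUnits = O.unitGroup.subgroupOf O₀.unitGroup := by
  ext x
  have hmem : ∀ y : O₀.unitGroup,
      (O₀.unitGroupToResidueFieldUnits y : ResidueField O₀) ∈ Obar ↔ ((y : Fˣ) : F) ∈ O := by
    intro y
    rw [coe_unitGroupToResidueFieldUnits_apply, ← coe_unitGroupMulEquiv_apply]
    exact residue_mem_iff hle hObar _
  rw [Subgroup.mem_comap, Subgroup.mem_subgroupOf, mem_unitGroup_iff_mem_and_inv_mem,
    mem_unitGroup_iff_mem_and_inv_mem, ← map_inv, hmem, hmem]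
  rfl

noncomputable def toInduced (hle : O ≤ O₀)
    (hObar : IsInducedBy Obar O) :
    O →+* Obar :=
  ((residue O₀).comp (O.inclusion O₀ hle)).codRestrict Obar
    fun x => (residue_mem_iff hle hObar _).mpr x.2

theorem toInduced_surjective (hle : O ≤ O₀)
    (hObar : IsInducedBy Obar O) :
    Function.Surjective (toInduced hle hObar) := by
  rintro ⟨b, hb⟩
  rw [← SetLike.mem_coe, hObar] at hb
  obtain ⟨y, hy, rfl⟩ := hb
  exact ⟨⟨y, hy⟩, rfl⟩

noncomputable def residueFieldEquivInduced (hle : O ≤ O₀)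
    (hObar : IsInducedBy Obar O) :
    ResidueField O ≃+* ResidueField Obar :=
  have hsurj : Function.Surjective ((residue Obar).comp (toInduced hle hObar)) :=
    residue_surjective.comp (toInduced_surjective hle hObar)
  (Ideal.quotEquivOfEq (ker_eq_maximalIdeal _ hsurj).symm).trans
    (RingHom.quotientKerEquivOfSurjective hsurj)

theorem residueFieldEquivInduced_residue (hle : O ≤ O₀)
    (hObar : IsInducedBy Obar O) (x : O) :
    residueFieldEquivInduced hle hObar (residue O x) = residue Obar (toInduced hle hObar x) :=
  rfl

end Induced

end ValuationSubring

open ValuationSubring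

theorem residueFieldMap_residue (f : K →+* L) (Ov : ValuationSubring K)
    (Ow : ValuationSubring L) (h : Ow.comap f = Ov) (x : Ov) :
    residueFieldMap f Ov Ow h (residue Ov x) = residue Ow (prolongHom f Ov Ow h x) :=
  haveI := prolongHom_isLocalHom f Ov Ow h
  ResidueField.map_residue _ x

theorem unitGroupToResidueFieldUnits_unitsMap (f : K →+* L) {Ov : ValuationSubring K}
    {Ow : ValuationSubring L} (h : Ow.comap f = Ov) (x : Ov.unitGroup)
    (hx : Units.map (f : K →* L) x ∈ Ow.unitGroup) :
    Ow.unitGroupToResidueFieldUnits ⟨_, hx⟩ =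
      Units.map (residueFieldMap f Ov Ow h : ResidueField Ov →* ResidueField Ow)
        (Ov.unitGroupToResidueFieldUnits x) := by
  ext
  rfl

theorem map_unitGroupToResidueFieldUnits_range_unitsMap (f : K →+* L)
    {Ov : ValuationSubring K} {Ow : ValuationSubring L} (h : Ow.comap f = Ov) :
    ((Units.map (f : K →* L)).range.subgroupOf Ow.unitGroup).map Ow.unitGroupToResidueFieldUnits =
      (Units.map (residueFieldMap f Ov Ow h : ResidueField Ov →* ResidueField Ow)).range := by
  have hunits : ∀ k : Kˣ, Units.map (f : K →* L) k ∈ Ow.unitGroup ↔ k ∈ Ov.unitGroup := by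
    intro k
    rw [← h, unitGroup_comap, Subgroup.mem_comap]
  ext y
  constructor
  · rintro ⟨⟨_, hx⟩, ⟨k, rfl⟩, rfl⟩
    exact ⟨_, (unitGroupToResidueFieldUnits_unitsMap f h ⟨k, (hunits k).mp hx⟩ hx).symm⟩
  · rintro ⟨a, rfl⟩
    obtain ⟨k, rfl⟩ := Ov.surjective_unitGroupToResidueFieldUnits a
    have hk := (hunits k).mpr k.2
    exact ⟨⟨_, hk⟩, ⟨k, rfl⟩, unitGroupToResidueFieldUnits_unitsMap f h k hk⟩

theorem ramificationIndex_eq_index_sup (f : K →+* L) (Ow : ValuationSubring L) :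
    ramificationIndex f Ow = ((Units.map (f : K →* L)).range ⊔ Ow.unitGroup).index := by
  rw [ramificationIndex, MonoidHom.range_comp, Subgroup.index_map, QuotientGroup.ker_mk',
    MonoidHom.range_eq_top_of_surjective _ (QuotientGroup.mk'_surjective _),
    Subgroup.index_top, mul_one]

theorem inertiaDegree_eq_of_ringEquiv {K' L' : Type*} [Field K'] [Field L'] {f : K →+* L}
    {f' : K' →+* L'} {Ov : ValuationSubring K} {Ow : ValuationSubring L}
    {Ov' : ValuationSubring K'} {Ow' : ValuationSubring L'} (h : Ow.comap f = Ov)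
    (h' : Ow'.comap f' = Ov') (i : ResidueField Ov ≃+* ResidueField Ov')
    (j : ResidueField Ow ≃+* ResidueField Ow')
    (hc : (residueFieldMap f' Ov' Ow' h').comp i.toRingHom =
      j.toRingHom.comp (residueFieldMap f Ov Ow h)) :
    inertiaDegree f Ov Ow = inertiaDegree f' Ov' Ow' := by
  let _ := (residueFieldMap f Ov Ow h).toAlgebra
  let _ := (residueFieldMap f' Ov' Ow' h').toAlgebra
  rw [inertiaDegree, inertiaDegree, dif_pos h, dif_pos h']
  exact Algebra.finrank_eq_of_equiv_equiv i j hc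

section Induced

variable {Ov Ov₀ : ValuationSubring K} {Ou Ou₀ : ValuationSubring L}
  {Obarv : ValuationSubring (ResidueField Ov₀)} {Obaru : ValuationSubring (ResidueField Ou₀)}

theorem comap_residueFieldMap_eq_induced (f : K →+* L) (hle : Ov ≤ Ov₀)
    (hObarv : IsInducedBy Obarv Ov)
    (hule : Ou ≤ Ou₀)
    (hObaru : IsInducedBy Obaru Ou)
    (hu : Ou.comap f = Ov) (hu₀ : Ou₀.comap f = Ov₀) :
    Obaru.comap (residueFieldMap f Ov₀ Ou₀ hu₀) = Obarv := by
  ext a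
  obtain ⟨y, rfl⟩ := residue_surjective a
  rw [mem_comap, residueFieldMap_residue, residue_mem_iff hule hObaru, residue_mem_iff hle hObarv,
    ← hu, mem_comap]
  rfl

theorem residueFieldMap_comp_residueFieldEquivInduced (f : K →+* L) (hle : Ov ≤ Ov₀)
    (hObarv : IsInducedBy Obarv Ov)
    (hule : Ou ≤ Ou₀)
    (hObaru : IsInducedBy Obaru Ou)
    (hu : Ou.comap f = Ov) (hu₀ : Ou₀.comap f = Ov₀)
    (hbar : Obaru.comap (residueFieldMap f Ov₀ Ou₀ hu₀) = Obarv) :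
    (residueFieldMap (residueFieldMap f Ov₀ Ou₀ hu₀) Obarv Obaru hbar).comp
        (residueFieldEquivInduced hle hObarv).toRingHom =
      (residueFieldEquivInduced hule hObaru).toRingHom.comp (residueFieldMap f Ov Ou hu) := by
  ext a
  obtain ⟨x, rfl⟩ := residue_surjective a
  simp only [RingHom.comp_apply, RingEquiv.toRingHom_eq_coe, RingEquiv.coe_toRingHom]
  rw [residueFieldEquivInduced_residue, residueFieldMap_residue, residueFieldMap_residue,
    residueFieldEquivInduced_residue]
  rfl

end Induced

theorem ramificationIndex_comp_and_inertiaDegree_comp_general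
    {K L : Type*} [Field K] [Field L] [Algebra K L]
    (Ov Ov0 : ValuationSubring K) (hle : Ov ≤ Ov0)
    (Obarv : ValuationSubring (IsLocalRing.ResidueField Ov0))
    (hObarv : (Obarv : Set (IsLocalRing.ResidueField Ov0)) =
      (IsLocalRing.residue Ov0) '' {y : Ov0 | (y : K) ∈ Ov})
    (Ou Ou0 : ValuationSubring L)
    (hu : Ou.comap (algebraMap K L) = Ov)
    (hule : Ou ≤ Ou0)
    (hu0 : Ou0.comap (algebraMap K L) = Ov0)
    (Obaru : ValuationSubring (IsLocalRing.ResidueField Ou0))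
    (hObaru : (Obaru : Set (IsLocalRing.ResidueField Ou0)) =
      (IsLocalRing.residue Ou0) '' {y : Ou0 | (y : L) ∈ Ou}) :
    ramificationIndex (algebraMap K L) Ou =
        ramificationIndex (algebraMap K L) Ou0 *
          ramificationIndex (residueFieldMap (algebraMap K L) Ov0 Ou0 hu0) Obaru ∧
      inertiaDegree (algebraMap K L) Ov Ou =
        inertiaDegree (residueFieldMap (algebraMap K L) Ov0 Ou0 hu0) Obarv Obaru := by
  have hbar := comap_residueFieldMap_eq_induced _ hle hObarv hule hObaru hu hu0
  constructor
  · simp only [ramificationIndex_eq_index_sup]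
    exact Subgroup.index_sup_eq_mul_of_comap_eq (unitGroup_le_unitGroup.mpr hule) _
      Ou0.surjective_unitGroupToResidueFieldUnits
      (comap_unitGroupToResidueFieldUnits_unitGroup hule hObaru)
      (map_unitGroupToResidueFieldUnits_range_unitsMap _ hu0)
  · exact inertiaDegree_eq_of_ringEquiv hu hbar _ _
      (residueFieldMap_comp_residueFieldEquivInduced _ hle hObarv hule hObaru hu hu0 hbar)

/-- Multiplicativity of ramification index and invariance of inertia degree under the
standard decomposition: let `O_v ⊆ O_{v0}` be valuation subrings of `K` with induced
valuation subring `Ō_v` of the residue field `Kv0` of `O_{v0}`, let `L/K` be a finite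
extension, let `O_u` be a prolongation of `O_v` to `L`, let `O_{u0}` be the (unique)
coarsening of `O_u` prolonging `O_{v0}`, and let `Ō_u` be the image of `O_u` in the
residue field `Lu0` of `O_{u0}` (a prolongation of `Ō_v` with respect to the embedding
`Kv0 → Lu0`).  Then `e(u/v) = e(u0/v0)·e(ū/v̄)` and `f(u/v) = f(ū/v̄)`. -/
theorem ramificationIndex_comp_and_inertiaDegree_comp
    {K L : Type*} [Field K] [Field L] [Algebra K L] [FiniteDimensional K L]
    (Ov Ov0 : ValuationSubring K) (hle : Ov ≤ Ov0)
    (Obarv : ValuationSubring (IsLocalRing.ResidueField Ov0))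
    (hObarv : (Obarv : Set (IsLocalRing.ResidueField Ov0)) =
      (IsLocalRing.residue Ov0) '' {y : Ov0 | (y : K) ∈ Ov})
    (Ou Ou0 : ValuationSubring L)
    (hu : Ou.comap (algebraMap K L) = Ov)
    (hule : Ou ≤ Ou0)
    (hu0 : Ou0.comap (algebraMap K L) = Ov0)
    (Obaru : ValuationSubring (IsLocalRing.ResidueField Ou0))
    (hObaru : (Obaru : Set (IsLocalRing.ResidueField Ou0)) =
      (IsLocalRing.residue Ou0) '' {y : Ou0 | (y : L) ∈ Ou}) :
    ramificationIndex (algebraMap K L) Ou =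
        ramificationIndex (algebraMap K L) Ou0 *
          ramificationIndex (residueFieldMap (algebraMap K L) Ov0 Ou0 hu0) Obaru ∧
      inertiaDegree (algebraMap K L) Ov Ou =
        inertiaDegree (residueFieldMap (algebraMap K L) Ov0 Ou0 hu0) Obarv Obaru :=
  ramificationIndex_comp_and_inertiaDegree_comp_general Ov Ov0 hle Obarv hObarv Ou Ou0 hu hule hu0
    Obaru hObaru
end

section
/- Let K be a field, let O_v ⊆ O_{v0} be valuation subrings of K with induced valuation subring Ō_v of the residue field Kv0, and let L/K be an algebraic field extension. For a prolongation O_u of O_v to L, let O_{u0} denote the unique valuation subring of L with O_u ⊆ O_{u0} and O_{u0} ∩ K = O_{v0}, and let Ō_u denote the image of O_u in the residue field Lu0 of O_{u0}. Then the map O_u ↦ (O_{u0}, Ō_u) is a bijection from the set of all prolongations of O_v to L onto the set of all pairs (O', Ō) such that O' is a prolongation of O_{v0} to L and Ō is a prolongation of Ō_v to the residue field of O' (with respect to the embedding of Kv0 into the residue field of O' induced by the inclusion O_{v0} ⊆ O'). -/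
variable {K : Type*} [Field K] {L : Type*} [Field L]

namespace ProlongAux

/-- If `B ≤ C` and `y` lies in the maximal ideal of `C`, then `y ∈ B`. -/
lemma mem_of_lt_one (B C : ValuationSubring L) (hBC : B ≤ C) {y : L} (hy : y ∈ C)
    (hlt : C.valuation y < 1) : y ∈ B := by
  rcases eq_or_ne y 0 with rfl | hy0
  · exact zero_mem B
  have hinv : y⁻¹ ∉ C := by
    intro h
    have h1 := (C.valuation_le_one_iff y⁻¹).2 h
    have h2 : (1 : C.ValueGroup) = C.valuation y * C.valuation y⁻¹ := by
      rw [← map_mul, mul_inv_cancel₀ hy0, map_one]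
    have h3 : C.valuation y * C.valuation y⁻¹ ≤ C.valuation y :=
      mul_le_of_le_one_right' h1
    exact absurd (h2 ▸ h3) (not_le_of_gt hlt)
  have : y⁻¹ ∉ B := fun h => hinv (hBC h)
  rcases B.mem_or_inv_mem y with h | h
  · exact h
  · exact absurd h this

/-- Coarsenings of a common valuation subring are comparable. -/
lemma comparable (A B C : ValuationSubring L) (hB : A ≤ B) (hC : A ≤ C) : B ≤ C ∨ C ≤ B := by
  by_cases h : B ≤ C
  · exact Or.inl h
  · right
    rw [SetLike.not_le_iff_exists] at h
    obtain ⟨x, hxB, hxC⟩ := h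
    intro y hy
    have hx0 : x ≠ 0 := fun h => hxC (h ▸ zero_mem C)
    by_contra hyB
    rcases A.mem_or_inv_mem (y / x) with h | h
    · exact hyB (by simpa [div_mul_cancel₀ _ hx0] using mul_mem (hB h) hxB)
    · rw [inv_div] at h
      exact hxC (by simpa [div_mul_cancel₀ _ (fun h0 : y = 0 => hyB (h0 ▸ zero_mem B))]
        using mul_mem (hC h) hy)

end ProlongAux

namespace ProlongAux

open Polynomial in
/-- For an algebraic extension `L/K`, two comparable valuation subrings of `L` with the
same restriction to `K` are equal. -/
lemma le_of_comap_eq [Algebra K L] [Algebra.IsAlgebraic K L] (B C : ValuationSubring L)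
    (hBC : B ≤ C) (h : B.comap (algebraMap K L) = C.comap (algebraMap K L)) : C ≤ B := by
  intro x hxC
  by_contra hxB
  have hx0 : x ≠ 0 := fun h0 => hxB (h0 ▸ zero_mem B)
  set w := B.valuation with hw
  have hx1 : 1 < w x := not_le.mp (fun hle => hxB ((B.valuation_le_one_iff x).mp hle))
  obtain ⟨p, hp, hpx⟩ := (Algebra.IsAlgebraic.isAlgebraic (R := K) x)
  set f : ℕ → L := fun i => algebraMap K L (p.coeff i) * x ^ i with hf
  have hsum : ∑ i ∈ p.support, f i = 0 := by
    rw [← hpx, aeval_def, eval₂_eq_sum, Polynomial.sum]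
  have hne : ∀ i ∈ p.support, w (f i) ≠ 0 := by
    intro i hi
    simp only [hf, map_mul, map_pow]
    have h1 : w (algebraMap K L (p.coeff i)) ≠ 0 := by
      rw [Valuation.ne_zero_iff]
      simp [Polynomial.mem_support_iff.mp hi]
    have h2 : w x ≠ 0 := by rw [Valuation.ne_zero_iff]; exact hx0
    exact mul_ne_zero h1 (pow_ne_zero _ h2)
  -- find two indices with equal (maximal) value
  have hsupp : p.support.Nonempty := Polynomial.nonempty_support_iff.mpr hp
  obtain ⟨i0, hi0, hmax⟩ := p.support.exists_max_image (fun i => w (f i)) hsupp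
  have hex : ∃ j ∈ p.support, j ≠ i0 ∧ w (f j) = w (f i0) := by
    by_contra hcon
    push_neg at hcon
    have hlt : ∀ j ∈ p.support.erase i0, w (f j) < w (f i0) := by
      intro j hj
      have hj' := Finset.mem_of_mem_erase hj
      exact lt_of_le_of_ne (hmax j hj') (hcon j hj' (Finset.ne_of_mem_erase hj))
    have := Valuation.map_add_eq_of_lt_left w (Valuation.map_sum_lt w (hne i0 hi0) hlt)
    rw [← Finset.add_sum_erase _ _ hi0] at hsum
    rw [hsum, map_zero] at this
    exact hne i0 hi0 this.symm
  obtain ⟨j0, hj0, hji, hEq⟩ := hex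
  -- wlog i < j
  obtain ⟨i, j, hi, hj, hij, hv⟩ : ∃ i j, i ∈ p.support ∧ j ∈ p.support ∧ i < j ∧
      w (f i) = w (f j) := by
    rcases lt_or_gt_of_ne hji with hlt | hlt
    · exact ⟨j0, i0, hj0, hi0, hlt, hEq⟩
    · exact ⟨i0, j0, hi0, hj0, hlt, hEq.symm⟩
  set m := j - i with hm
  have hm0 : m ≠ 0 := Nat.sub_ne_zero_of_lt hij
  have hci : p.coeff i ≠ 0 := Polynomial.mem_support_iff.mp hi
  have hcj : p.coeff j ≠ 0 := Polynomial.mem_support_iff.mp hj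
  set c : K := p.coeff i / p.coeff j with hc
  have hc0 : c ≠ 0 := div_ne_zero hci hcj
  have hwaj : w (algebraMap K L (p.coeff j)) ≠ 0 := by
    rw [Valuation.ne_zero_iff]; simp [hcj]
  have hwx : w x ≠ 0 := by rw [Valuation.ne_zero_iff]; exact hx0
  have hkey : w (algebraMap K L c) = w x ^ m := by
    have h1 : w (algebraMap K L (p.coeff i)) * w x ^ i =
        (w (algebraMap K L (p.coeff j)) * w x ^ m) * w x ^ i := by
      have := hv
      simp only [hf, map_mul, map_pow] at this
      rw [this, mul_assoc, ← pow_add]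
      congr 2
      omega
    have h2 := mul_right_cancel₀ (pow_ne_zero i hwx) h1
    rw [hc, map_div₀, map_div₀, h2]
    rw [mul_comm, mul_div_assoc, div_self hwaj, mul_one]
  have hcB : algebraMap K L c ∉ B := by
    intro hmem
    have := (B.valuation_le_one_iff _).mpr hmem
    rw [hkey] at this
    exact absurd this (not_le_of_gt (one_lt_pow₀ hx1 hm0))
  have hcC : algebraMap K L c ∉ C := by
    intro hmem
    have : c ∈ C.comap (algebraMap K L) := hmem
    rw [← h] at this
    exact hcB this
  have hinvC : (algebraMap K L c)⁻¹ ∈ C := (C.mem_or_inv_mem _).resolve_left hcC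
  -- u = x^m / algebraMap c is a unit of B, hence in C together with its inverse
  have hu1 : w (x ^ m / algebraMap K L c) = 1 := by
    rw [map_div₀, map_pow, hkey, div_self (pow_ne_zero m hwx)]
  have huinv : w (algebraMap K L c / x ^ m) = 1 := by
    rw [map_div₀, map_pow, hkey, div_self (pow_ne_zero m hwx)]
  have huB : algebraMap K L c / x ^ m ∈ B :=
    (B.valuation_le_one_iff _).mp (le_of_eq huinv)
  have : algebraMap K L c ∈ C := by
    have hxm : x ^ m ∈ C := pow_mem hxC m
    have := mul_mem hxm (hBC huB)
    rwa [mul_div_cancel₀ _ (pow_ne_zero m hx0)] at this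
  exact hcC this

end ProlongAux


namespace ProlongAux

open IsLocalRing

/-- If `B ≤ C`, two elements of `C` with the same residue and one lying in `B`
force the other to lie in `B`. -/
lemma mem_of_residue_eq (B C : ValuationSubring L) (hBC : B ≤ C) (y z : C)
    (h : IsLocalRing.residue C y = IsLocalRing.residue C z) (hz : (z : L) ∈ B) :
    (y : L) ∈ B := by
  have h' : Ideal.Quotient.mk (IsLocalRing.maximalIdeal C) y =
      Ideal.Quotient.mk (IsLocalRing.maximalIdeal C) z := h
  have hsub : y - z ∈ IsLocalRing.maximalIdeal C := Ideal.Quotient.eq.mp h'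
  have : ((y - z : C) : L) ∈ B := by
    rcases eq_or_ne ((y - z : C) : L) 0 with h0 | h0
    · exact h0 ▸ zero_mem B
    · exact mem_of_lt_one B C hBC (y - z).2 ((C.valuation_lt_one_iff _).mp hsub)
  have := add_mem this hz
  simpa using this

/-- The coarsening of `Ou` generated by (the image of) `Ov0`. -/
def extend [Algebra K L] (Ou : ValuationSubring L) (Ov0 : ValuationSubring K) :
    ValuationSubring L where
  carrier := {x | ∃ c ∈ Ov0, c ≠ 0 ∧ x / algebraMap K L c ∈ Ou}
  one_mem' := ⟨1, one_mem _, one_ne_zero, by simpa using one_mem Ou⟩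
  zero_mem' := ⟨1, one_mem _, one_ne_zero, by simpa using zero_mem Ou⟩
  mul_mem' := by
    rintro x y ⟨c, hc, hc0, hx⟩ ⟨d, hd, hd0, hy⟩
    refine ⟨c * d, mul_mem hc hd, mul_ne_zero hc0 hd0, ?_⟩
    rw [map_mul]
    have := mul_mem hx hy
    rwa [div_mul_div_comm] at this
  add_mem' := by
    rintro x y ⟨c, hc, hc0, hx⟩ ⟨d, hd, hd0, hy⟩
    have hcL : algebraMap K L c ≠ 0 := by
      simpa using hc0
    have hdL : algebraMap K L d ≠ 0 := by
      simpa using hd0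
    rcases Ou.mem_or_inv_mem (algebraMap K L c / algebraMap K L d) with h | h
    · refine ⟨d, hd, hd0, ?_⟩
      have key : x / algebraMap K L c * (algebraMap K L c / algebraMap K L d) =
          x / algebraMap K L d := by
        rw [div_mul_div_comm, mul_comm x, mul_div_mul_left _ _ hcL]
      have hx' : x / algebraMap K L d ∈ Ou := key ▸ mul_mem hx h
      rw [add_div]
      exact add_mem hx' hy
    · rw [inv_div] at h
      refine ⟨c, hc, hc0, ?_⟩
      have key : y / algebraMap K L d * (algebraMap K L d / algebraMap K L c) =
          y / algebraMap K L c := by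
        rw [div_mul_div_comm, mul_comm y, mul_div_mul_left _ _ hdL]
      have hy' : y / algebraMap K L c ∈ Ou := key ▸ mul_mem hy h
      rw [add_div]
      exact add_mem hx hy'
  neg_mem' := by
    rintro x ⟨c, hc, hc0, hx⟩
    exact ⟨c, hc, hc0, by rw [neg_div]; exact neg_mem hx⟩
  mem_or_inv_mem' := by
    intro x
    rcases Ou.mem_or_inv_mem x with h | h
    · exact Or.inl ⟨1, one_mem _, one_ne_zero, by simpa using h⟩
    · exact Or.inr ⟨1, one_mem _, one_ne_zero, by simpa using h⟩

lemma le_extend [Algebra K L] (Ou : ValuationSubring L) (Ov0 : ValuationSubring K) :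
    Ou ≤ extend Ou Ov0 :=
  fun x hx => ⟨1, one_mem _, one_ne_zero, by simpa using hx⟩

lemma extend_comap [Algebra K L] (Ou : ValuationSubring L) (Ov Ov0 : ValuationSubring K)
    (hOu : Ou.comap (algebraMap K L) = Ov) (hle : Ov ≤ Ov0) :
    (extend Ou Ov0).comap (algebraMap K L) = Ov0 := by
  ext x
  constructor
  · rintro ⟨c, hc, hc0, hx⟩
    rw [← map_div₀] at hx
    have : x / c ∈ Ov := hOu ▸ hx
    have := mul_mem (hle this) hc
    rwa [div_mul_cancel₀ _ hc0] at this
  · intro hx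
    rcases eq_or_ne x 0 with rfl | hx0
    · exact zero_mem _
    · exact ⟨x, hx, hx0, by rw [div_self (by simpa using hx0)]; exact one_mem Ou⟩

/-- The image of `Ou` in the residue field of a coarsening `O'`. -/
def residueImage (O' Ou : ValuationSubring L) (h : Ou ≤ O') :
    ValuationSubring (ResidueField O') :=
  { (Ou.toSubring.comap O'.subtype).map (IsLocalRing.residue O') with
    mem_or_inv_mem' := by
      intro ξ
      obtain ⟨y, rfl⟩ := Ideal.Quotient.mk_surjective ξ
      by_cases hy : (y : L) ∈ Ou
      · exact Or.inl ⟨y, hy, rfl⟩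
      · right
        have hy0 : (y : L) ≠ 0 := fun h0 => hy (h0 ▸ zero_mem Ou)
        have hyinv : (y : L)⁻¹ ∈ Ou := (Ou.mem_or_inv_mem _).resolve_left hy
        have hyu : (y : L)⁻¹ ∈ O' := h hyinv
        refine ⟨⟨(y : L)⁻¹, hyu⟩, hyinv, ?_⟩
        have hmul : IsLocalRing.residue O' ⟨(y : L)⁻¹, hyu⟩ * IsLocalRing.residue O' y = 1 := by
          rw [← map_mul, ← map_one (IsLocalRing.residue O')]
          congr 1
          ext
          simp [inv_mul_cancel₀ hy0]
        exact eq_inv_of_mul_eq_one_left hmul }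

lemma mem_residueImage (O' Ou : ValuationSubring L) (h : Ou ≤ O')
    (ξ : ResidueField O') : ξ ∈ residueImage O' Ou h ↔
      ∃ y : O', (y : L) ∈ Ou ∧ IsLocalRing.residue O' y = ξ :=
  Iff.rfl

/-- The pullback of a valuation subring of the residue field of `O'`. -/
def residuePreimage (O' : ValuationSubring L) (Obar : ValuationSubring (ResidueField O')) :
    ValuationSubring L :=
  { (Obar.toSubring.comap (IsLocalRing.residue O')).map O'.subtype with
    mem_or_inv_mem' := by
      intro x
      by_cases hx : x ∈ O'
      · by_cases hr : IsLocalRing.residue O' ⟨x, hx⟩ ∈ Obar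
        · exact Or.inl ⟨⟨x, hx⟩, hr, rfl⟩
        · right
          have hr0 : IsLocalRing.residue O' ⟨x, hx⟩ ≠ 0 := fun h0 => hr (h0 ▸ zero_mem Obar)
          have hx0 : x ≠ 0 := by
            rintro rfl
            exact hr0 (map_zero _)
          have hxu : IsUnit (⟨x, hx⟩ : O') := by
            by_contra hnu
            exact hr0 (Ideal.Quotient.eq_zero_iff_mem.mpr
              ((IsLocalRing.mem_maximalIdeal _).mpr (mem_nonunits_iff.mpr hnu)))
          obtain ⟨u, hu⟩ := hxu
          have h3 : ((u : O') : L) * (((u⁻¹ : O'ˣ) : O') : L) = 1 := by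
            have h4 : ((u : O') * ((u⁻¹ : O'ˣ) : O') : O') = 1 := by
              exact_mod_cast Units.mul_inv u
            exact_mod_cast congrArg (fun t : O' => (t : L)) h4
          rw [hu] at h3
          have hxinv : x⁻¹ ∈ O' := by
            have hv : (((u⁻¹ : O'ˣ) : O') : L) = x⁻¹ := eq_inv_of_mul_eq_one_right h3
            exact hv ▸ ((u⁻¹ : O'ˣ) : O').2
          have hmul : IsLocalRing.residue O' ⟨x, hx⟩ *
              IsLocalRing.residue O' ⟨x⁻¹, hxinv⟩ = 1 := by
            rw [← map_mul, ← map_one (IsLocalRing.residue O')]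
            congr 1
            ext
            simp [mul_inv_cancel₀ hx0]
          have hrinv : IsLocalRing.residue O' ⟨x⁻¹, hxinv⟩ ∈ Obar := by
            have hOinv := (Obar.mem_or_inv_mem
              (IsLocalRing.residue O' ⟨x, hx⟩)).resolve_left hr
            rwa [eq_inv_of_mul_eq_one_right hmul]
          exact ⟨⟨x⁻¹, hxinv⟩, hrinv, rfl⟩
      · right
        have hxinv : x⁻¹ ∈ O' := (O'.mem_or_inv_mem x).resolve_left hx
        have hnu : (⟨x⁻¹, hxinv⟩ : O') ∈ maximalIdeal O' := by
          rw [mem_maximalIdeal, mem_nonunits_iff]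
          intro hu
          rcases isUnit_iff_exists_inv.mp hu with ⟨b, hb⟩
          have hb' : x⁻¹ * (b : L) = 1 := congrArg Subtype.val hb
          have hx0 : x ≠ 0 := by
            rintro rfl
            simp at hb'
          have hbx : (b : L) = x := by
            have h2 := congrArg (x * ·) hb'
            simpa [← mul_assoc, mul_inv_cancel₀ hx0] using h2
          exact hx (hbx ▸ b.2)
        refine ⟨⟨x⁻¹, hxinv⟩, ?_, rfl⟩
        have : IsLocalRing.residue O' ⟨x⁻¹, hxinv⟩ = 0 :=
          Ideal.Quotient.eq_zero_iff_mem.mpr hnu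
        exact Subring.mem_comap.mpr (by rw [this]; exact zero_mem Obar.toSubring) }

lemma mem_residuePreimage (O' : ValuationSubring L) (Obar : ValuationSubring (ResidueField O'))
    (x : L) : x ∈ residuePreimage O' Obar ↔
      ∃ hx : x ∈ O', IsLocalRing.residue O' ⟨x, hx⟩ ∈ Obar := by
  constructor
  · rintro ⟨y, hy, rfl⟩
    exact ⟨y.2, by simpa using hy⟩
  · rintro ⟨hx, h⟩
    exact ⟨⟨x, hx⟩, h, rfl⟩

lemma residuePreimage_le (O' : ValuationSubring L) (Obar : ValuationSubring (ResidueField O')) :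
    residuePreimage O' Obar ≤ O' := by
  rintro x ⟨y, _, rfl⟩
  exact y.2

end ProlongAux


namespace ProlongAux

open IsLocalRing

lemma residueFieldMap_residue [Algebra K L] (Ov : ValuationSubring K) (Ow : ValuationSubring L)
    (h : Ow.comap (algebraMap K L) = Ov) (y : Ov) :
    residueFieldMap (algebraMap K L) Ov Ow h (residue Ov y) =
      residue Ow (prolongHom (algebraMap K L) Ov Ow h y) := by
  haveI := prolongHom_isLocalHom (algebraMap K L) Ov Ow h
  unfold residueFieldMap
  exact ResidueField.map_residue _ y

lemma coe_prolongHom [Algebra K L] (Ov : ValuationSubring K) (Ow : ValuationSubring L)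
    (h : Ow.comap (algebraMap K L) = Ov) (y : Ov) :
    (prolongHom (algebraMap K L) Ov Ow h y : L) = algebraMap K L (y : K) := rfl

/-- Pulling back the image valuation along the residue field embedding gives the
induced valuation downstairs. -/
lemma residueImage_comap [Algebra K L] (Ou O' : ValuationSubring L) (hOuO' : Ou ≤ O')
    (Ov Ov0 : ValuationSubring K) (hOu : Ou.comap (algebraMap K L) = Ov)
    (hO' : O'.comap (algebraMap K L) = Ov0)
    (Obarv : ValuationSubring (ResidueField Ov0))
    (hObarv : (Obarv : Set (ResidueField Ov0)) =
      (residue Ov0) '' {y : Ov0 | (y : K) ∈ Ov}) :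
    (residueImage O' Ou hOuO').comap (residueFieldMap (algebraMap K L) Ov0 O' hO') = Obarv := by
  ext ξ
  obtain ⟨y, rfl⟩ := Ideal.Quotient.mk_surjective ξ
  change residueFieldMap (algebraMap K L) Ov0 O' hO' (residue Ov0 y) ∈ residueImage O' Ou hOuO' ↔
    residue Ov0 y ∈ Obarv
  have hres : residueFieldMap (algebraMap K L) Ov0 O' hO'
      (residue Ov0 y) = residue O' (prolongHom (algebraMap K L) Ov0 O' hO' y) :=
    residueFieldMap_residue Ov0 O' hO' y
  rw [hres]
  constructor
  · rintro ⟨z, hz, hzres⟩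
    have hmem : ((prolongHom (algebraMap K L) Ov0 O' hO' y : O') : L) ∈ Ou :=
      mem_of_residue_eq Ou O' hOuO' _ z hzres.symm hz
    rw [coe_prolongHom] at hmem
    have hyOv : (y : K) ∈ Ov := by
      rw [← hOu]
      exact hmem
    have : residue Ov0 y ∈ (Obarv : Set (ResidueField Ov0)) := by
      rw [hObarv]
      exact ⟨y, hyOv, rfl⟩
    exact this
  · intro hξ
    have : residue Ov0 y ∈ (Obarv : Set (ResidueField Ov0)) := hξ
    rw [hObarv] at this
    obtain ⟨y', hy', hyres⟩ := this
    refine ⟨prolongHom (algebraMap K L) Ov0 O' hO' y', ?_, ?_⟩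
    · show ((prolongHom (algebraMap K L) Ov0 O' hO' y' : O') : L) ∈ Ou
      rw [coe_prolongHom]
      have : (y' : K) ∈ Ou.comap (algebraMap K L) := by rw [hOu]; exact hy'
      exact this
    · rw [← residueFieldMap_residue Ov0 O' hO' y', ← residueFieldMap_residue Ov0 O' hO' y]
      exact congrArg _ hyres

/-- The pullback of the residue preimage valuation to `K` is `Ov`. -/
lemma residuePreimage_comap [Algebra K L] (O' : ValuationSubring L)
    (Obar : ValuationSubring (ResidueField O')) (Ov Ov0 : ValuationSubring K) (hle : Ov ≤ Ov0)
    (Obarv : ValuationSubring (ResidueField Ov0))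
    (hObarv : (Obarv : Set (ResidueField Ov0)) =
      (residue Ov0) '' {y : Ov0 | (y : K) ∈ Ov})
    (hO' : O'.comap (algebraMap K L) = Ov0)
    (hObar : Obar.comap (residueFieldMap (algebraMap K L) Ov0 O' hO') = Obarv) :
    (residuePreimage O' Obar).comap (algebraMap K L) = Ov := by
  ext x
  rw [ValuationSubring.mem_comap, mem_residuePreimage]
  constructor
  · rintro ⟨hx, hres⟩
    have hx0 : x ∈ Ov0 := by
      rw [← hO']
      exact hx
    have heq : residueFieldMap (algebraMap K L) Ov0 O' hO' (residue Ov0 ⟨x, hx0⟩) =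
        residue O' ⟨algebraMap K L x, hx⟩ := by
      rw [residueFieldMap_residue]
      congr 1
    have h1 : residue Ov0 ⟨x, hx0⟩ ∈ Obarv := by
      rw [← hObar, ValuationSubring.mem_comap, heq]
      exact hres
    have h2 : residue Ov0 ⟨x, hx0⟩ ∈ (Obarv : Set (ResidueField Ov0)) := h1
    rw [hObarv] at h2
    obtain ⟨y', hy', hyres⟩ := h2
    exact mem_of_residue_eq Ov Ov0 hle ⟨x, hx0⟩ y' hyres.symm hy'
  · intro hx
    have hx0 : x ∈ Ov0 := hle hx
    have hxO' : algebraMap K L x ∈ O' := by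
      have h5 : x ∈ O'.comap (algebraMap K L) := by rw [hO']; exact hx0
      exact h5
    refine ⟨hxO', ?_⟩
    have heq : residueFieldMap (algebraMap K L) Ov0 O' hO' (residue Ov0 ⟨x, hx0⟩) =
        residue O' ⟨algebraMap K L x, hxO'⟩ := by
      rw [residueFieldMap_residue]
      congr 1
    have h1 : residue Ov0 ⟨x, hx0⟩ ∈ Obarv := by
      have : residue Ov0 ⟨x, hx0⟩ ∈ (Obarv : Set (ResidueField Ov0)) := by
        rw [hObarv]
        exact ⟨⟨x, hx0⟩, hx, rfl⟩
      exact this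
    rw [← hObar, ValuationSubring.mem_comap, heq] at h1
    exact h1

lemma unique_coarsening [Algebra K L] [Algebra.IsAlgebraic K L] (Ou B C : ValuationSubring L)
    (hB : Ou ≤ B) (hC : Ou ≤ C)
    (h : B.comap (algebraMap K L) = C.comap (algebraMap K L)) : B = C := by
  rcases comparable Ou B C hB hC with hle | hle
  · exact le_antisymm hle (le_of_comap_eq B C hle h)
  · exact (le_antisymm hle (le_of_comap_eq C B hle h.symm)).symm

lemma residuePreimage_residueImage (O' Ou : ValuationSubring L) (h : Ou ≤ O') :
    residuePreimage O' (residueImage O' Ou h) = Ou := by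
  ext x
  rw [mem_residuePreimage]
  constructor
  · rintro ⟨hx, z, hz, hres⟩
    exact mem_of_residue_eq Ou O' h ⟨x, hx⟩ z hres.symm hz
  · intro hx
    exact ⟨h hx, ⟨x, h hx⟩, hx, rfl⟩

lemma image_residuePreimage (O' : ValuationSubring L)
    (Obar : ValuationSubring (ResidueField O')) :
    (Obar : Set (ResidueField O')) =
      residue O' '' {y : O' | (y : L) ∈ residuePreimage O' Obar} := by
  ext ξ
  constructor
  · intro hξ
    obtain ⟨y, rfl⟩ := Ideal.Quotient.mk_surjective ξ
    refine ⟨y, ?_, rfl⟩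
    rw [Set.mem_setOf_eq, mem_residuePreimage]
    refine ⟨y.2, ?_⟩
    exact hξ
  · rintro ⟨y, hy, rfl⟩
    rw [Set.mem_setOf_eq, mem_residuePreimage] at hy
    obtain ⟨h', hres⟩ := hy
    exact hres

lemma residueImage_coe (O' Ou : ValuationSubring L) (h : Ou ≤ O') :
    (residueImage O' Ou h : Set (ResidueField O')) =
      residue O' '' {y : O' | (y : L) ∈ Ou} := by
  ext ξ
  constructor
  · rintro ⟨y, hy, rfl⟩
    exact ⟨y, hy, rfl⟩
  · rintro ⟨y, hy, rfl⟩
    exact ⟨y, hy, rfl⟩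

end ProlongAux


/-- Let `O_v ⊆ O_{v0}` be valuation subrings of `K` with induced valuation subring
`Ō_v` of the residue field of `O_{v0}`, and let `L/K` be an algebraic extension.
The map `O_u ↦ (O_{u0}, Ō_u)` — sending a prolongation `O_u` of `O_v` to `L` to the
pair consisting of the unique coarsening `O_{u0}` of `O_u` prolonging `O_{v0}`
together with the image `Ō_u` of `O_u` in the residue field of `O_{u0}` — is a
bijection from the set of prolongations of `O_v` to `L` onto the set of pairs
`(O', Ō)` where `O'` is a prolongation of `O_{v0}` to `L` and `Ō` is a prolongation
of `Ō_v` to the residue field of `O'` (with respect to the embedding induced by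
`O_{v0} ⊆ O'`). -/
theorem prolongations_comp_bijection
    {K L : Type*} [Field K] [Field L] [Algebra K L] [Algebra.IsAlgebraic K L]
    (Ov Ov0 : ValuationSubring K) (hle : Ov ≤ Ov0)
    (Obarv : ValuationSubring (IsLocalRing.ResidueField Ov0))
    (hObarv : (Obarv : Set (IsLocalRing.ResidueField Ov0)) =
      (IsLocalRing.residue Ov0) '' {y : Ov0 | (y : K) ∈ Ov}) :
    ∃ e : {Ou : ValuationSubring L | Ou.comap (algebraMap K L) = Ov} ≃
        {p : (O' : ValuationSubring L) × ValuationSubring (IsLocalRing.ResidueField O') |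
          ∃ h : p.1.comap (algebraMap K L) = Ov0,
            p.2.comap (residueFieldMap (algebraMap K L) Ov0 p.1 h) = Obarv},
      ∀ Ou : {Ou : ValuationSubring L | Ou.comap (algebraMap K L) = Ov},
        (Ou : ValuationSubring L) ≤ (e Ou : (O' : ValuationSubring L) ×
            ValuationSubring (IsLocalRing.ResidueField O')).1 ∧
          (((e Ou : (O' : ValuationSubring L) ×
              ValuationSubring (IsLocalRing.ResidueField O')).2 :
            Set (IsLocalRing.ResidueField ((e Ou : (O' : ValuationSubring L) ×
              ValuationSubring (IsLocalRing.ResidueField O')).1))) =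
            (IsLocalRing.residue _) ''
              {y : ((e Ou : (O' : ValuationSubring L) ×
                ValuationSubring (IsLocalRing.ResidueField O')).1) |
                  (y : L) ∈ (Ou : ValuationSubring L)}) := by
  classical
  set G : {p : (O' : ValuationSubring L) × ValuationSubring (IsLocalRing.ResidueField O') |
        ∃ h : p.1.comap (algebraMap K L) = Ov0,
          p.2.comap (residueFieldMap (algebraMap K L) Ov0 p.1 h) = Obarv} →
      {Ou : ValuationSubring L | Ou.comap (algebraMap K L) = Ov} :=
    fun p => ⟨ProlongAux.residuePreimage p.1.1 p.1.2,
      ProlongAux.residuePreimage_comap p.1.1 p.1.2 Ov Ov0 hle Obarv hObarv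
        p.2.choose p.2.choose_spec⟩ with hGdef
  have hGinj : Function.Injective G := by
    rintro ⟨⟨O1, B1⟩, h1⟩ ⟨⟨O2, B2⟩, h2⟩ h
    have hOu : ProlongAux.residuePreimage O1 B1 = ProlongAux.residuePreimage O2 B2 :=
      congrArg Subtype.val h
    obtain ⟨hc1, -⟩ := id h1
    obtain ⟨hc2, -⟩ := id h2
    have hO : O1 = O2 := ProlongAux.unique_coarsening (ProlongAux.residuePreimage O1 B1) O1 O2
      (ProlongAux.residuePreimage_le _ _)
      (by rw [hOu]; exact ProlongAux.residuePreimage_le _ _)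
      (by rw [hc1, hc2])
    subst hO
    have hB : B1 = B2 := by
      apply SetLike.ext'
      rw [ProlongAux.image_residuePreimage O1 B1, ProlongAux.image_residuePreimage O1 B2, hOu]
    subst hB
    exact Subtype.ext rfl
  have hGsurj : Function.Surjective G := by
    rintro ⟨Ou, hOu⟩
    have hOu' : Ou.comap (algebraMap K L) = Ov := hOu
    have hext := ProlongAux.extend_comap Ou Ov Ov0 hOu' hle
    refine ⟨⟨⟨ProlongAux.extend Ou Ov0,
      ProlongAux.residueImage _ Ou (ProlongAux.le_extend Ou Ov0)⟩,
      hext, ProlongAux.residueImage_comap Ou _ (ProlongAux.le_extend Ou Ov0) Ov Ov0 hOu' hext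
        Obarv hObarv⟩, ?_⟩
    exact Subtype.ext
      (ProlongAux.residuePreimage_residueImage _ Ou (ProlongAux.le_extend Ou Ov0))
  refine ⟨(Equiv.ofBijective G ⟨hGinj, hGsurj⟩).symm, ?_⟩
  intro Ou
  set p := (Equiv.ofBijective G ⟨hGinj, hGsurj⟩).symm Ou with hpdef
  have hp : G p = Ou := (Equiv.ofBijective G ⟨hGinj, hGsurj⟩).apply_symm_apply Ou
  have hval : ProlongAux.residuePreimage (p : (O' : ValuationSubring L) ×
      ValuationSubring (IsLocalRing.ResidueField O')).1 (p : (O' : ValuationSubring L) ×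
      ValuationSubring (IsLocalRing.ResidueField O')).2 = (Ou : ValuationSubring L) :=
    congrArg Subtype.val hp
  constructor
  · rw [← hval]
    exact ProlongAux.residuePreimage_le _ _
  · rw [ProlongAux.image_residuePreimage, hval]
end

section
/- Let Γ be a linearly ordered abelian group and let γ ∈ Γ with γ > 0. Let Γ_{γ−} be the largest convex subgroup of Γ not containing γ and Γ_{γ+} the smallest convex subgroup of Γ containing γ. Then the linearly ordered quotient group Γ_{γ+}/Γ_{γ−} has no least positive element if and only if for every integer n ≥ 1 there exist an integer N > n and an element x ∈ Γ with 0 < x, n·x ≤ γ, and γ ≤ N·x. -/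
/-- Let `γ > 0` in a linearly ordered abelian group `Γ`, let `Γ_{γ−}` (here `Δm`) be the
largest convex subgroup of `Γ` not containing `γ` and `Γ_{γ+}` (here `Δp`) the smallest
convex subgroup containing `γ`.  Then the linearly ordered quotient group `Δp/Δm`
(where the coset of `x` is `≤` the coset of `y` iff `x ≤ y + d` for some `d ∈ Δm`,
so that the coset of `x` is positive iff there is no `d ∈ Δm` with `x ≤ d`)
has no least positive element if and only if for every `n ≥ 1` there are `N > n` and
`x ∈ Γ` with `0 < x`, `n·x ≤ γ` and `γ ≤ N·x`. -/
theorem quotient_not_discrete_iff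
    {Γ : Type*} [AddCommGroup Γ] [LinearOrder Γ] [IsOrderedAddMonoid Γ] (γ : Γ) (hγ : 0 < γ)
    (Δm Δp : AddSubgroup Γ)
    (hΔm_conv : IsConvexSubgroup Δm) (hΔm_mem : γ ∉ Δm)
    (hΔm_max : ∀ H : AddSubgroup Γ, IsConvexSubgroup H → γ ∉ H → H ≤ Δm)
    (hΔp_conv : IsConvexSubgroup Δp) (hΔp_mem : γ ∈ Δp)
    (hΔp_min : ∀ H : AddSubgroup Γ, IsConvexSubgroup H → γ ∈ H → Δp ≤ H) :
    (¬ ∃ x ∈ Δp, (¬ ∃ d ∈ Δm, x ≤ d) ∧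
        ∀ y ∈ Δp, (¬ ∃ d ∈ Δm, y ≤ d) → ∃ d ∈ Δm, x ≤ y + d) ↔
      ∀ n : ℕ, 1 ≤ n → ∃ N : ℕ, ∃ x : Γ, n < N ∧ 0 < x ∧ n • x ≤ γ ∧ γ ≤ N • x := by
  -- The subgroup of elements infinitely smaller than γ is contained in Δm.
  have hS : ∀ y : Γ, (∀ k : ℕ, k • |y| ≤ γ) → y ∈ Δm := by
    intro y hy
    let S : AddSubgroup Γ :=
      { carrier := {z | ∀ k : ℕ, k • |z| ≤ γ}
        zero_mem' := by intro k; simp [hγ.le]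
        add_mem' := by
          intro a b ha hb k
          have habs : |a + b| ≤ |a| + |b| := abs_add_le a b
          rcases le_total |a| |b| with h | h
          · have : k • |a + b| ≤ (2 * k) • |b| := by
              rw [two_mul, add_smul]
              calc k • |a + b| ≤ k • (|a| + |b|) := nsmul_le_nsmul_right habs k
                _ ≤ k • |b| + k • |b| := by
                    rw [smul_add]; exact add_le_add_left (nsmul_le_nsmul_right h k) _
            exact this.trans (hb (2 * k))
          · have : k • |a + b| ≤ (2 * k) • |a| := by
              rw [two_mul, add_smul]
              calc k • |a + b| ≤ k • (|a| + |b|) := nsmul_le_nsmul_right habs k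
                _ ≤ k • |a| + k • |a| := by
                    rw [smul_add]
                    exact add_le_add (le_refl _) (nsmul_le_nsmul_right h k)
            exact this.trans (ha (2 * k))
        neg_mem' := by intro a ha k; simpa [abs_neg] using ha k }
    have hSconv : IsConvexSubgroup S := by
      intro h hh x hx0 hxh k
      have hh0 : 0 ≤ h := hx0.trans hxh
      have : |x| ≤ |h| := by rw [abs_of_nonneg hx0, abs_of_nonneg hh0]; exact hxh
      exact (nsmul_le_nsmul_right this k).trans (hh k)
    have hSγ : γ ∉ S := by
      intro hγS
      have := hγS 2
      rw [abs_of_pos hγ, two_nsmul] at this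
      exact absurd this (by simpa using hγ)
    exact hΔm_max S hSconv hSγ (show y ∈ S from hy)
  -- membership in Δm implies all multiples stay below γ (contrapositive tool)
  have hnot : ∀ x : Γ, 0 < x → x ∉ Δm → ∃ k : ℕ, γ < k • x := by
    intro x hx0 hxm
    by_contra h
    push_neg at h
    exact hxm (hS x (by intro k; rw [abs_of_pos hx0]; exact h k))
  -- positivity in the quotient
  have hpos_iff : ∀ y : Γ, (¬ ∃ d ∈ Δm, y ≤ d) ↔ (0 < y ∧ y ∉ Δm) := by
    intro y
    constructor
    · intro h
      constructor
      · by_contra hy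
        push_neg at hy
        exact h ⟨0, Δm.zero_mem, hy⟩
      · intro hm
        exact h ⟨y, hm, le_refl y⟩
    · rintro ⟨hy0, hym⟩ ⟨d, hd, hyd⟩
      exact hym (hΔm_conv d hd y hy0.le hyd)
  constructor
  · -- no least positive element → divisibility statement
    intro hno n hn
    have halve : ∀ u, u ∈ Δp → 0 < u → u ∉ Δm →
        ∃ v, v ∈ Δp ∧ 0 < v ∧ v ∉ Δm ∧ 2 • v ≤ u := by
      intro u huP hu0 hum
      have h1 : ¬ ∀ y ∈ Δp, (¬ ∃ d ∈ Δm, y ≤ d) → ∃ d ∈ Δm, u ≤ y + d :=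
        fun h => hno ⟨u, huP, (hpos_iff u).mpr ⟨hu0, hum⟩, h⟩
      push_neg at h1
      obtain ⟨y, hyP, hyPos, hxy⟩ := h1
      have hy0 : 0 < y := hyPos 0 Δm.zero_mem
      have hym : y ∉ Δm := fun h => lt_irrefl y (hyPos y h)
      have hlt : ∀ d ∈ Δm, y + d < u := hxy
      have hyu : y < u := by simpa using hlt 0 Δm.zero_mem
      set z := u - y with hz
      have hz0 : 0 < z := sub_pos.mpr hyu
      have hzm : z ∉ Δm := by
        intro hzm
        have := hlt z hzm
        simp [hz] at this
      have hzP : z ∈ Δp := Δp.sub_mem huP hyP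
      by_cases hc : ∃ d ∈ Δm, y ≤ z + d
      · obtain ⟨d, hd, hyzd⟩ := hc
        have hdabs : |d| ∈ Δm := by
          rcases abs_choice d with h | h
          · rw [h]; exact hd
          · rw [h]; exact Δm.neg_mem hd
        refine ⟨y - |d|, ?_, ?_, ?_, ?_⟩
        · -- y - |d| ∈ Δp : need |d| ∈ Δp
          have hdγ : |d| ≤ γ := by
            by_contra hgt
            push_neg at hgt
            exact hΔm_mem (hΔm_conv |d| hdabs γ hγ.le hgt.le)
          have : |d| ∈ Δp := hΔp_conv γ hΔp_mem |d| (abs_nonneg d) hdγ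
          exact Δp.sub_mem hyP this
        · -- 0 < y - |d|
          have : ¬ y ≤ |d| := fun hle => hym (hΔm_conv |d| hdabs y hy0.le hle)
          push_neg at this
          exact sub_pos.mpr this
        · -- y - |d| ∉ Δm
          intro hmem
          exact hym (by simpa using Δm.add_mem hmem hdabs)
        · -- 2 • (y - |d|) ≤ u
          have h2y : y + y ≤ u + d := by
            calc y + y ≤ y + (z + d) := add_le_add_right hyzd y
              _ = u + d := by rw [hz]; abel
          rw [two_smul, sub_add_sub_comm]
          calc y + y - (|d| + |d|) ≤ u + d - (|d| + |d|) := sub_le_sub_right h2y _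
            _ ≤ u := by
                rw [sub_le_iff_le_add]
                refine add_le_add_right ?_ u
                calc d ≤ |d| := le_abs_self d
                  _ ≤ |d| + |d| := le_add_of_nonneg_left (abs_nonneg d)
      · push_neg at hc
        refine ⟨z, hzP, hz0, hzm, ?_⟩
        have hzy : z < y := by
          have := hc 0 Δm.zero_mem
          simpa using this
        have h2 : z + y = u := by rw [hz]; abel
        rw [two_smul]
        exact ((add_lt_add_right hzy z).trans_eq h2).le
    -- iterate halving
    have iter : ∀ m : ℕ, ∃ x, x ∈ Δp ∧ 0 < x ∧ x ∉ Δm ∧ 2 ^ m • x ≤ γ := by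
      intro m
      induction m with
      | zero => exact ⟨γ, hΔp_mem, hγ, hΔm_mem, by simp⟩
      | succ m ih =>
        obtain ⟨x, hxP, hx0, hxm, hxγ⟩ := ih
        obtain ⟨v, hvP, hv0, hvm, hv2⟩ := halve x hxP hx0 hxm
        refine ⟨v, hvP, hv0, hvm, ?_⟩
        have : (2 ^ (m + 1)) • v = 2 ^ m • (2 • v) := by
          rw [← mul_smul, pow_succ]
        rw [this]
        exact (nsmul_le_nsmul_right hv2 (2 ^ m)).trans hxγ
    obtain ⟨x, hxP, hx0, hxm, hxγ⟩ := iter n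
    obtain ⟨k, hk⟩ := hnot x hx0 hxm
    refine ⟨max k (n + 1), x, lt_of_lt_of_le (Nat.lt_succ_self n) (le_max_right _ _), hx0, ?_, ?_⟩
    · exact (nsmul_le_nsmul_left hx0.le (Nat.le_of_lt (Nat.lt_two_pow_self (n := n)))).trans hxγ
    · exact hk.le.trans (nsmul_le_nsmul_left hx0.le (le_max_left _ _))
  · -- divisibility statement → no least positive element
    intro hrhs
    rintro ⟨x₀, hx₀P, hx₀pos, hmin⟩
    rw [hpos_iff] at hx₀pos
    obtain ⟨hx₀0, hx₀m⟩ := hx₀pos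
    obtain ⟨m, hm⟩ := hnot x₀ hx₀0 hx₀m
    have hm1 : 1 ≤ m := by
      by_contra h
      push_neg at h
      interval_cases m
      simp at hm
      exact absurd hm (not_lt.mpr hγ.le)
    -- key: ∀ d ∈ Δm, γ + d < (2*m) • x₀
    have hP : ∀ d ∈ Δm, γ + d < (2 * m) • x₀ := by
      intro d hd
      have hdlt : d < m • x₀ := by
        by_contra hle
        push_neg at hle
        have hx₀le : x₀ ≤ m • x₀ := by
          calc x₀ = 1 • x₀ := (one_smul ℕ x₀).symm
            _ ≤ m • x₀ := nsmul_le_nsmul_left hx₀0.le hm1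
        exact hx₀m (hΔm_conv d hd x₀ hx₀0.le (hx₀le.trans hle))
      calc γ + d < m • x₀ + m • x₀ := add_lt_add hm hdlt
        _ = (2 * m) • x₀ := by rw [two_mul, add_smul]
    obtain ⟨N, x, hN, hx0, hkx, hNx⟩ := hrhs (2 * m) (by omega)
    have hxm : x ∉ Δm := by
      intro hxm
      exact hΔm_mem (hΔm_conv (N • x) (Δm.nsmul_mem hxm N) γ hγ.le hNx)
    have hxP : x ∈ Δp := by
      have hxle : x ≤ γ := by
        calc x = 1 • x := (one_smul ℕ x).symm
          _ ≤ (2 * m) • x := nsmul_le_nsmul_left hx0.le (by omega)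
          _ ≤ γ := hkx
      exact hΔp_conv γ hΔp_mem x hx0.le hxle
    obtain ⟨d, hd, hle⟩ := hmin x hxP ((hpos_iff x).mpr ⟨hx0, hxm⟩)
    have h1 : (2 * m) • x₀ ≤ (2 * m) • x + (2 * m) • d := by
      rw [← smul_add]
      exact nsmul_le_nsmul_right hle (2 * m)
    have h2 : (2 * m) • x + (2 * m) • d ≤ γ + (2 * m) • d :=
      add_le_add_left hkx _
    have h3 := hP ((2 * m) • d) (Δm.nsmul_mem hd (2 * m))
    exact absurd (h1.trans h2) (not_le.mpr h3)
end

section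
/- Let Γ be a linearly ordered abelian group and let p be a prime number. Then the set S = {x ∈ Γ : for all y ∈ Γ, if 0 ≤ y ≤ |x| then there exists z ∈ Γ with p·z = y} is a convex subgroup of Γ, S is p-divisible (for every s ∈ S there exists t ∈ S with p·t = s), and every p-divisible convex subgroup of Γ is contained in S; that is, S is the maximal p-divisible convex subgroup of Γ. -/
/-!
An element `x` lies in `S` exactly when the whole interval `[0, |x|]` consists of `p`-multiples.
Membership therefore only gets easier as `|x|` shrinks, which makes `S` convex and closed under
negation; closure under addition holds because `y ≤ |a| + |b|` either lies below `|a|` or is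
`|a|` plus an element of `[0, |b|]`. If `p • z = |s|` with `s ∈ S`, then `|z| ≤ |s|`, so `S` is
`p`-divisible. Finally a `p`-divisible convex subgroup containing `x` contains `[0, |x|]`, hence
lies in `S`.
-/

namespace AddSubgroup

variable {Γ : Type*} [AddCommGroup Γ] [LinearOrder Γ] [IsOrderedAddMonoid Γ] {n : ℕ}

theorem exists_nsmul_eq_of_le_abs_add {a b y : Γ}
    (ha : ∀ y, 0 ≤ y → y ≤ |a| → ∃ z, n • z = y) (hb : ∀ y, 0 ≤ y → y ≤ |b| → ∃ z, n • z = y)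
    (hy : 0 ≤ y) (hyab : y ≤ |a + b|) : ∃ z, n • z = y := by
  rcases le_total y |a| with hya | hay
  · exact ha y hy hya
  · obtain ⟨z₁, hz₁⟩ := ha |a| (abs_nonneg a) le_rfl
    obtain ⟨z₂, hz₂⟩ := hb (y - |a|) (sub_nonneg.2 hay)
      (sub_le_iff_le_add'.2 (hyab.trans (abs_add_le a b)))
    exact ⟨z₁ + z₂, by rw [smul_add, hz₁, hz₂, add_sub_cancel]⟩

variable (Γ n) in
def nsmulDivisibleCore : AddSubgroup Γ where
  carrier := {x | ∀ y, 0 ≤ y → y ≤ |x| → ∃ z, n • z = y}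
  zero_mem' y hy hy0 := ⟨0, by rw [smul_zero, le_antisymm (abs_zero (α := Γ) ▸ hy0) hy]⟩
  add_mem' ha hb _ hy hyab := exists_nsmul_eq_of_le_abs_add ha hb hy hyab
  neg_mem' {x} hx y hy hyx := hx y hy (abs_neg x ▸ hyx)

theorem mem_nsmulDivisibleCore_of_abs_le {x y : Γ} (hx : x ∈ nsmulDivisibleCore Γ n)
    (hyx : |y| ≤ |x|) : y ∈ nsmulDivisibleCore Γ n :=
  fun z hz hzy => hx z hz (hzy.trans hyx)

theorem isConvexSubgroup_nsmulDivisibleCore : IsConvexSubgroup (nsmulDivisibleCore Γ n) :=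
  fun h hh _ hx hxh =>
    mem_nsmulDivisibleCore_of_abs_le hh ((abs_of_nonneg hx).trans_le (hxh.trans (le_abs_self h)))

theorem exists_mem_nsmulDivisibleCore_nsmul_eq (hn : n ≠ 0) {s : Γ}
    (hs : s ∈ nsmulDivisibleCore Γ n) : ∃ t ∈ nsmulDivisibleCore Γ n, n • t = s := by
  obtain ⟨z, hz⟩ := hs |s| (abs_nonneg s) le_rfl
  have hzs : |z| ≤ |s| := by
    rw [← abs_abs s, ← hz, abs_nsmul]
    exact le_self_nsmul (abs_nonneg z) hn
  have hz_mem : z ∈ nsmulDivisibleCore Γ n := mem_nsmulDivisibleCore_of_abs_le hs hzs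
  rcases abs_choice s with h | h
  · exact ⟨z, hz_mem, hz.trans h⟩
  · exact ⟨-z, neg_mem hz_mem, by rw [smul_neg, hz, h, neg_neg]⟩

theorem le_nsmulDivisibleCore {H : AddSubgroup Γ} (hconv : IsConvexSubgroup H)
    (hdiv : ∀ h ∈ H, ∃ h' ∈ H, n • h' = h) : H ≤ nsmulDivisibleCore Γ n := by
  intro x hx y hy hyx
  obtain ⟨z, -, hz⟩ := hdiv y (hconv |x| (abs_mem_iff.2 hx) y hy hyx)
  exact ⟨z, hz⟩

end AddSubgroup

open AddSubgroup in
/-- For a linearly ordered abelian group `Γ` and a prime `p`, the set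
`S = {x ∈ Γ : ∀ y, 0 ≤ y ≤ |x| → ∃ z, p·z = y}` is a convex subgroup of `Γ`, it is
`p`-divisible, and it contains every `p`-divisible convex subgroup of `Γ`; i.e. `S` is
the maximal `p`-divisible convex subgroup of `Γ`. -/
theorem maximal_pDivisible_convex_subgroup
    {Γ : Type*} [AddCommGroup Γ] [LinearOrder Γ] [IsOrderedAddMonoid Γ] (p : ℕ) (hp : p.Prime) :
    ∃ S : AddSubgroup Γ,
      (S : Set Γ) = {x : Γ | ∀ y : Γ, 0 ≤ y → y ≤ |x| → ∃ z : Γ, p • z = y} ∧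
      IsConvexSubgroup S ∧
      (∀ s ∈ S, ∃ t ∈ S, p • t = s) ∧
      ∀ H : AddSubgroup Γ, IsConvexSubgroup H → (∀ h ∈ H, ∃ h' ∈ H, p • h' = h) →
        H ≤ S :=
  ⟨nsmulDivisibleCore Γ p, rfl, isConvexSubgroup_nsmulDivisibleCore,
    fun _ => exists_mem_nsmulDivisibleCore_nsmul_eq hp.ne_zero, fun _ => le_nsmulDivisibleCore⟩
end

section
/- Let Γ be a linearly ordered abelian group, p a prime number, and γ ∈ Γ with γ > 0. If every y ∈ Γ with 0 ≤ y ≤ γ is p-divisible in Γ (i.e. there exists z ∈ Γ with p·z = y), then the smallest convex subgroup Γ_{γ+} of Γ containing γ is a p-divisible subgroup (for every h ∈ Γ_{γ+} there exists h' ∈ Γ_{γ+} with p·h' = h). -/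
section

variable {Γ : Type*} [AddCommGroup Γ] [LinearOrder Γ] [IsOrderedAddMonoid Γ]

theorem isConvexSubgroup_closedBallAddSubgroup (c : ArchimedeanClass Γ) :
    IsConvexSubgroup c.closedBallAddSubgroup := by
  intro h hh x hx hxh
  rw [ArchimedeanClass.mem_closedBallAddSubgroup_iff] at hh ⊢
  refine hh.trans (ArchimedeanClass.mk_le_mk_of_abs ?_)
  rw [abs_of_nonneg hx]
  exact hxh.trans (le_abs_self h)

theorem exists_nsmul_eq_of_le_nsmul {p : ℕ} {γ : Γ} (hγ : 0 ≤ γ)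
    (hdiv : ∀ y : Γ, 0 ≤ y → y ≤ γ → ∃ z : Γ, p • z = y) (n : ℕ) :
    ∀ y : Γ, 0 ≤ y → y ≤ n • γ → ∃ z : Γ, p • z = y := by
  induction n with
  | zero =>
    intro y hy₀ hy
    exact ⟨0, by rw [smul_zero, le_antisymm (by simpa using hy) hy₀]⟩
  | succ n ih =>
    intro y hy₀ hy
    by_cases hyn : y ≤ n • γ
    · exact ih y hy₀ hyn
    obtain ⟨z₁, hz₁⟩ := hdiv (y - n • γ) (sub_nonneg.mpr (le_of_not_ge hyn))
      (by rwa [sub_le_iff_le_add', ← succ_nsmul])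
    obtain ⟨z₂, hz₂⟩ := ih (n • γ) (nsmul_nonneg hγ n) le_rfl
    exact ⟨z₁ + z₂, by rw [smul_add, hz₁, hz₂, sub_add_cancel]⟩

theorem IsConvexSubgroup.exists_mem_nsmul_eq {H : AddSubgroup Γ} (hH : IsConvexSubgroup H)
    {p : ℕ} (hp : p ≠ 0) {h z : Γ} (hh : h ∈ H) (hz : p • z = |h|) : ∃ h' ∈ H, p • h' = h := by
  have hz₀ : 0 ≤ z := (nsmul_nonneg_iff hp).mp (hz ▸ abs_nonneg h)
  have hzH : z ∈ H := hH |h| (abs_mem_iff.mpr hh) z hz₀ (hz ▸ le_self_nsmul hz₀ hp)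
  rcases abs_choice h with habs | habs
  · exact ⟨z, hzH, hz.trans habs⟩
  · exact ⟨-z, neg_mem hzH, by rw [smul_neg, hz, habs, neg_neg]⟩

end

theorem pDivisible_of_interval_pDivisible_general
    {Γ : Type*} [AddCommGroup Γ] [LinearOrder Γ] [IsOrderedAddMonoid Γ] (p : ℕ)
    (γ : Γ) (hγ : 0 < γ)
    (hdiv : ∀ y : Γ, 0 ≤ y → y ≤ γ → ∃ z : Γ, p • z = y)
    (Δp : AddSubgroup Γ) (hconv : IsConvexSubgroup Δp)
    (hmin : ∀ H : AddSubgroup Γ, IsConvexSubgroup H → γ ∈ H → Δp ≤ H) :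
    ∀ h ∈ Δp, ∃ h' ∈ Δp, p • h' = h := by
  have hp : p ≠ 0 := by
    rintro rfl
    obtain ⟨z, hz⟩ := hdiv γ hγ.le le_rfl
    exact hγ.ne (by simpa using hz)
  have hball : Δp ≤ (ArchimedeanClass.mk γ).closedBallAddSubgroup :=
    hmin _ (isConvexSubgroup_closedBallAddSubgroup _)
      (ArchimedeanClass.mem_closedBallAddSubgroup_iff.mpr le_rfl)
  intro h hh
  obtain ⟨n, hn⟩ := ArchimedeanClass.mk_le_mk.mp
    (ArchimedeanClass.mem_closedBallAddSubgroup_iff.mp (hball hh))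
  rw [abs_of_pos hγ] at hn
  obtain ⟨z, hz⟩ := exists_nsmul_eq_of_le_nsmul hγ.le hdiv n |h| (abs_nonneg h) hn
  exact hconv.exists_mem_nsmul_eq hp hh hz

/-- Let `Γ` be a linearly ordered abelian group, `p` a prime, and `γ ∈ Γ` with `γ > 0`.
If every `y` with `0 ≤ y ≤ γ` is `p`-divisible in `Γ`, then the smallest convex
subgroup `Γ_{γ+}` of `Γ` containing `γ` is `p`-divisible. -/
theorem pDivisible_of_interval_pDivisible
    {Γ : Type*} [AddCommGroup Γ] [LinearOrder Γ] [IsOrderedAddMonoid Γ] (p : ℕ) (hp : p.Prime)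
    (γ : Γ) (hγ : 0 < γ)
    (hdiv : ∀ y : Γ, 0 ≤ y → y ≤ γ → ∃ z : Γ, p • z = y)
    (Δp : AddSubgroup Γ) (hconv : IsConvexSubgroup Δp) (hmem : γ ∈ Δp)
    (hmin : ∀ H : AddSubgroup Γ, IsConvexSubgroup H → γ ∈ H → Δp ≤ H) :
    ∀ h ∈ Δp, ∃ h' ∈ Δp, p • h' = h :=
  pDivisible_of_interval_pDivisible_general p γ hγ hdiv Δp hconv hmin
end

section
/- Let K be a field of characteristic 0 and O_v a valuation subring of K whose residue field has characteristic p > 0 (i.e. p lies in the maximal ideal of O_v). Let v : K× → K×/O_v× =: vK be the associated valuation into its linearly ordered value group. If the set {g ∈ vK : 0 ≤ g ≤ v(p)} is finite, then for every valuation subring O of K with O_v ⊊ O, the residue field of O has characteristic 0 (equivalently, p does not lie in the maximal ideal of O). -/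
/-!
If `y ∈ O \ O_v`, then `t = y⁻¹` has positive value, so the classes of `1, t, t², …` are pairwise
distinct elements of the value group. Finiteness of `[0, v(p)]` forces `v(tⁿ) > v(p)` for some `n`,
i.e. `p yⁿ ∉ O_v`; then `(p yⁿ)⁻¹ ∈ O_v ⊆ O` and `p⁻¹ = (p yⁿ)⁻¹ yⁿ ∈ O`, so `p` is a unit of `O`.
Since the maximal ideal of `O` lies in that of `O_v`, a prime `q` vanishing in the residue field
of `O` vanishes in that of `O_v`, whose characteristic is `p`; hence `q = p`, a contradiction.
-/

namespace ValuationSubring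

variable {K : Type*} [Field K]

/-- The interval `[0, v(π)]` of the value group `Kˣ ⧸ A.unitGroup`. -/
def valueSegment (A : ValuationSubring K) (π : K) : Set (Kˣ ⧸ A.unitGroup) :=
  {g | ∃ x : Kˣ, QuotientGroup.mk x = g ∧ (x : K) ∈ A ∧ π / (x : K) ∈ A}

theorem injective_mk_pow {A : ValuationSubring K} {u : Kˣ} (hu : (u : K) ∈ A.nonunits) :
    Function.Injective fun n : ℕ => (QuotientGroup.mk (u ^ n) : Kˣ ⧸ A.unitGroup) := by
  intro m n hmn
  have hval : A.valuation (u : K) ^ m = A.valuation (u : K) ^ n := by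
    have h := (A.mem_unitGroup_iff _).1 (QuotientGroup.eq.1 hmn)
    simp only [Units.val_mul, Units.val_inv_eq_inv_val, Units.val_pow_eq_pow_val, map_mul,
      map_inv₀, map_pow] at h
    exact (inv_mul_eq_one₀ (pow_ne_zero _ (by simp))).1 h
  exact pow_right_injective₀ (A.valuation.pos_iff.2 u.ne_zero) (A.mem_nonunits_iff.1 hu).ne hval

theorem exists_mul_pow_notMem {A : ValuationSubring K} {π : K} (hfin : (A.valueSegment π).Finite)
    {y : K} (hy : y ∉ A) : ∃ n : ℕ, π * y ^ n ∉ A := by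
  have hy0 : y ≠ 0 := by rintro rfl; exact hy A.zero_mem
  set u : Kˣ := Units.mk0 y⁻¹ (inv_ne_zero hy0)
  have hu : (u : K) ∈ A.nonunits := A.inv_mem_nonunits_iff.2 (Or.inr hy)
  by_contra! h
  refine Set.infinite_of_injective_forall_mem (injective_mk_pow hu) (fun n => ?_) hfin
  refine ⟨u ^ n, rfl, ?_, ?_⟩
  · simpa only [Units.val_pow_eq_pow_val] using pow_mem (A.nonunits_subset hu) n
  · simpa [u, div_eq_mul_inv] using h n

theorem notMem_nonunits_of_lt {A B : ValuationSubring K} (hAB : A < B) {π : K}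
    (hfin : (A.valueSegment π).Finite) : π ∉ B.nonunits := by
  obtain ⟨y, hyB, hyA⟩ := SetLike.exists_of_lt hAB
  obtain ⟨n, hn⟩ := exists_mul_pow_notMem hfin hyA
  have hπ0 : π ≠ 0 := by rintro rfl; exact hn (by simp)
  have hy0 : y ≠ 0 := by rintro rfl; exact hyA A.zero_mem
  have hinv : (π * y ^ n)⁻¹ ∈ B := hAB.le ((A.mem_or_inv_mem _).resolve_left hn)
  have hπinv : π⁻¹ = (π * y ^ n)⁻¹ * y ^ n := by field_simp
  rw [B.mem_nonunits_iff_or, not_or, not_not, hπinv]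
  exact ⟨hπ0, B.mul_mem _ _ hinv (B.pow_mem hyB n)⟩

theorem natCast_mem_nonunits_iff (A : ValuationSubring K) (n : ℕ) :
    (n : K) ∈ A.nonunits ↔ (n : IsLocalRing.ResidueField A) = 0 := by
  rw [← map_natCast (IsLocalRing.residue A), IsLocalRing.residue_eq_zero_iff,
    ← coe_mem_nonunits_iff, A.coe_natCast]

theorem charZero_residueField_of_le {A B : ValuationSubring K} (hAB : A ≤ B) {p : ℕ}
    (hp : p.Prime) (hpA : (p : K) ∈ A.nonunits) (hpB : (p : K) ∉ B.nonunits) :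
    CharZero (IsLocalRing.ResidueField B) := by
  rcases CharP.exists' (IsLocalRing.ResidueField B) with h | ⟨q, hq, hchar⟩
  · exact h
  have hqB : (q : K) ∈ B.nonunits := (B.natCast_mem_nonunits_iff q).2 (CharP.cast_eq_zero _ q)
  have hqA : (q : K) ∈ A.nonunits := nonunits_le_nonunits.2 hAB hqB
  have : CharP (IsLocalRing.ResidueField A) p :=
    (CharP.charP_iff_prime_eq_zero hp).2 ((A.natCast_mem_nonunits_iff p).1 hpA)
  have hpq : p ∣ q := (CharP.cast_eq_zero_iff _ p q).1 ((A.natCast_mem_nonunits_iff q).1 hqA)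
  rw [(Nat.prime_dvd_prime_iff_eq hp hq.out).1 hpq] at hpB
  exact absurd hqB hpB

end ValuationSubring

open ValuationSubring in
theorem residue_charZero_of_proper_coarsening_of_finitely_ramified_general
    {K : Type*} [Field K] (Ov : ValuationSubring K)
    (p : ℕ) (hp : p.Prime)
    (hpm : (p : Ov) ∈ IsLocalRing.maximalIdeal Ov)
    (hfin : {g : Kˣ ⧸ Ov.unitGroup | ∃ x : Kˣ, QuotientGroup.mk x = g ∧
      (x : K) ∈ Ov ∧ (p : K) / (x : K) ∈ Ov}.Finite) :
    ∀ O : ValuationSubring K, Ov < O →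
      CharZero (IsLocalRing.ResidueField O) := by
  intro O hO
  have hpOv : (p : K) ∈ Ov.nonunits := by
    simpa only [Ov.coe_natCast] using coe_mem_nonunits_iff.2 hpm
  exact charZero_residueField_of_le hO.le hp hpOv (notMem_nonunits_of_lt hO hfin)

/-- Let `K` be a field of characteristic `0` and `O_v` a valuation subring of `K`
whose residue field has characteristic `p > 0` (i.e. `p` lies in the maximal ideal
of `O_v`).  The value group `vK` is `K^×/O_v^×`, where `v(x) ≥ 0` iff `x ∈ O_v`, so
that an element `g` of the value group satisfies `0 ≤ g ≤ v(p)` iff `g = v(x)` for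
some `x ∈ K^×` with `x ∈ O_v` and `p/x ∈ O_v`.  If the set of such `g` is finite
(i.e. `(K, O_v)` is finitely ramified), then for every valuation subring `O` of `K`
with `O_v ⊊ O` (i.e. every proper coarsening of `O_v`), the residue field of `O` has
characteristic `0`. -/
theorem residue_charZero_of_proper_coarsening_of_finitely_ramified
    {K : Type*} [Field K] [CharZero K] (Ov : ValuationSubring K)
    (p : ℕ) (hp : p.Prime)
    (hpm : (p : Ov) ∈ IsLocalRing.maximalIdeal Ov)
    (hfin : {g : Kˣ ⧸ Ov.unitGroup | ∃ x : Kˣ, QuotientGroup.mk x = g ∧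
      (x : K) ∈ Ov ∧ (p : K) / (x : K) ∈ Ov}.Finite) :
    ∀ O : ValuationSubring K, Ov < O →
      CharZero (IsLocalRing.ResidueField O) :=
  residue_charZero_of_proper_coarsening_of_finitely_ramified_general Ov p hp hpm hfin
end
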